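/- arXiv:2208.01788 — 6 statements merged into one kernel-verified Lean document; each statement's English description precedes it below -/
import Mathlib

section
/- Let F be a field, β₀ = 0, and β₁,…,β_J nonzero distinct elements of F. Let M ≥ 0, s ≥ 1 be integers and X₁,…,X_s variables. Then the (J+1)^s (M+1)^s rational functions ∏_{i=1}^s (X_i/(1-β_{j_i} X_i))^{m_i+1}, indexed by (j₁,…,j_s) ∈ {0,…,J}^s and (m₁,…,m_s) ∈ {0,…,M}^s, are linearly independent over F in F(X₁,…,X_s). -/
open Polynomial


theorem lemA' {K E : Type*} [Field K] [Field E] [Algebra K E] {θ : E}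
    (H : Transcendental K θ) {n M : ℕ} {β : Fin n → K} (hβ : Function.Injective β) :
    LinearIndependent K (fun q : Fin n × Fin (M + 1) =>
      ((θ - algebraMap K E (β q.1))⁻¹) ^ ((q.2 : ℕ) + 1)) := by
  classical
  have hinj : Function.Injective (Polynomial.aeval θ : K[X] →ₐ[K] E) :=
    transcendental_iff_injective.mp H
  have hne : ∀ j, θ - algebraMap K E (β j) ≠ 0 := fun j => by
    refine sub_ne_zero.mpr fun h => H ?_
    rw [h]; exact isAlgebraic_algebraMap _
  rw [Fintype.linearIndependent_iff]
  intro c hc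
  set P : Fin n → K[X] := fun j =>
    ∑ m : Fin (M + 1), C (c (j, m)) * (X - C (β j)) ^ (M - (m : ℕ)) with hP
  set Q : Fin n → K[X] := fun j =>
    ∏ l ∈ Finset.univ.erase j, (X - C (β l)) ^ (M + 1) with hQ
  have expand : ∀ j : Fin n, (Polynomial.aeval θ) (P j * Q j) =
      ∑ m : Fin (M + 1), c (j, m) • ((θ - algebraMap K E (β j))⁻¹) ^ ((m : ℕ) + 1) *
        ∏ l : Fin n, (θ - algebraMap K E (β l)) ^ (M + 1) := by
    intro j
    simp only [hP, hQ]
    rw [map_mul, map_sum, Finset.sum_mul]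
    refine Finset.sum_congr rfl fun m _ => ?_
    simp only [map_mul, map_pow, map_sub, map_prod, aeval_X, aeval_C]
    rw [Algebra.smul_def,
      ← Finset.mul_prod_erase Finset.univ _ (Finset.mem_univ j)]
    have hpow : (θ - algebraMap K E (β j)) ^ (M + 1) =
        (θ - algebraMap K E (β j)) ^ ((m : ℕ) + 1) *
        (θ - algebraMap K E (β j)) ^ (M - (m : ℕ)) := by
      rw [← pow_add]
      congr 1
      have := m.is_le
      omega
    rw [hpow]
    have h1 : (θ - algebraMap K E (β j))⁻¹ ^ ((m : ℕ) + 1) *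
        (θ - algebraMap K E (β j)) ^ ((m : ℕ) + 1) = 1 := by
      rw [inv_pow]
      exact inv_mul_cancel₀ (pow_ne_zero _ (hne j))
    linear_combination (-(algebraMap K E (c (j, m)) * (θ - algebraMap K E (β j)) ^ (M - (m : ℕ)) *
      ∏ l ∈ Finset.univ.erase j, (θ - algebraMap K E (β l)) ^ (M + 1))) * h1
  have key : ∑ j : Fin n, P j * Q j = 0 := by
    apply hinj
    rw [map_zero, map_sum]
    calc ∑ j : Fin n, (Polynomial.aeval θ) (P j * Q j)
        = ∑ j : Fin n, ∑ m : Fin (M + 1),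
            c (j, m) • ((θ - algebraMap K E (β j))⁻¹) ^ ((m : ℕ) + 1) *
            ∏ l : Fin n, (θ - algebraMap K E (β l)) ^ (M + 1) :=
          Finset.sum_congr rfl fun j _ => expand j
      _ = ∑ q : Fin n × Fin (M + 1),
            c q • ((θ - algebraMap K E (β q.1))⁻¹) ^ ((q.2 : ℕ) + 1) *
            ∏ l : Fin n, (θ - algebraMap K E (β l)) ^ (M + 1) :=
          (Fintype.sum_prod_type (f := fun q : Fin n × Fin (M + 1) =>
            c q • ((θ - algebraMap K E (β q.1))⁻¹) ^ ((q.2 : ℕ) + 1) *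
            ∏ l : Fin n, (θ - algebraMap K E (β l)) ^ (M + 1))).symm
      _ = (∑ q : Fin n × Fin (M + 1),
            c q • ((θ - algebraMap K E (β q.1))⁻¹) ^ ((q.2 : ℕ) + 1)) *
            ∏ l : Fin n, (θ - algebraMap K E (β l)) ^ (M + 1) := by
          rw [Finset.sum_mul]
      _ = 0 := by rw [hc, zero_mul]
  intro q0
  obtain ⟨j0, m0⟩ := q0
  have hdvd : (X - C (β j0)) ^ (M + 1) ∣ P j0 * Q j0 := by
    have hsum : P j0 * Q j0 = - ∑ j ∈ Finset.univ.erase j0, P j * Q j := by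
      rw [eq_neg_iff_add_eq_zero]
      rw [← Finset.add_sum_erase Finset.univ _ (Finset.mem_univ j0)] at key
      exact key
    rw [hsum]
    refine dvd_neg.mpr (Finset.dvd_sum fun j hj => ?_)
    have hj0 : j0 ∈ Finset.univ.erase j := by
      simp [Finset.mem_erase, (Finset.mem_erase.mp hj).1.symm]
    exact Dvd.dvd.mul_left (Finset.dvd_prod_of_mem _ hj0) (P j)
  have hcop : IsCoprime ((X - C (β j0)) ^ (M + 1)) (Q j0) := by
    refine IsCoprime.pow_left (IsCoprime.prod_right fun l hl => IsCoprime.pow_right ?_)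
    exact pairwise_coprime_X_sub_C hβ (Finset.mem_erase.mp hl).1.symm
  have hPdvd : (X - C (β j0)) ^ (M + 1) ∣ P j0 := hcop.dvd_of_dvd_mul_right hdvd
  have hP0 : P j0 = 0 := by
    by_contra h0
    have h1 := Polynomial.natDegree_le_of_dvd hPdvd h0
    rw [natDegree_pow, natDegree_X_sub_C, mul_one] at h1
    have h2 : (P j0).natDegree ≤ M := by
      refine Polynomial.natDegree_sum_le_of_forall_le _ _ fun m _ => ?_
      refine le_trans (natDegree_mul_le) ?_
      rw [natDegree_C, natDegree_pow, natDegree_X_sub_C, mul_one]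
      omega
    omega
  -- extract coefficients
  have hcomp : ∑ m : Fin (M + 1), C (c (j0, m)) * X ^ (M - (m : ℕ)) = 0 := by
    have := congrArg (Polynomial.aeval (X + C (β j0)) : K[X] →ₐ[K] K[X]) hP0
    rw [map_zero, hP, map_sum] at this
    rw [← this]
    refine Finset.sum_congr rfl fun m _ => ?_
    simp [Polynomial.algebraMap_eq]
  have := congrArg (fun p : K[X] => p.coeff (M - (m0 : ℕ))) hcomp
  simp only [Polynomial.finset_sum_coeff, Polynomial.coeff_C_mul, Polynomial.coeff_X_pow,
    Polynomial.coeff_zero] at this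
  rw [Finset.sum_eq_single m0] at this
  · rw [if_pos rfl, mul_one] at this
    exact this
  · intro m _ hm
    rw [if_neg, mul_zero]
    have h1 := m.is_le
    have h2 := m0.is_le
    intro h
    exact hm (Fin.ext (by omega))
  · intro h
    exact absurd (Finset.mem_univ m0) h


theorem transc_intermediate {K E : Type*} [Field K] [Field E] [Algebra K E] (S : Set E) (y : E)
    (h : Transcendental (Algebra.adjoin K S) y) :
    Transcendental (IntermediateField.adjoin K S) y := by
  intro halg
  apply h
  obtain ⟨p, hp, hpy⟩ := halg
  classical
  have hmem : ∀ r : MvPolynomial S K,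
      (MvPolynomial.aeval (Subtype.val : S → E)) r ∈ Algebra.adjoin K S := by
    intro r
    have h1 : Algebra.adjoin K S = Algebra.adjoin K (Set.range (Subtype.val : S → E)) := by
      rw [Subtype.range_coe]
    rw [h1, Algebra.adjoin_range_eq_range_aeval]
    exact ⟨r, rfl⟩
  choose r s hrs using fun i => (IntermediateField.mem_adjoin_iff K ((p.coeff i : E))).mp
    (p.coeff i).2
  set a : ℕ → E := fun i => MvPolynomial.aeval (Subtype.val : S → E) (r i) with ha
  set b : ℕ → E := fun i => MvPolynomial.aeval (Subtype.val : S → E) (s i) with hb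
  have hrs' : ∀ i, ((p.coeff i : E)) = a i / b i := fun i => hrs i
  have hbne : ∀ i ∈ p.support, b i ≠ 0 := by
    intro i hi hb0
    apply Polynomial.mem_support_iff.mp hi
    have : ((p.coeff i : E)) = 0 := by rw [hrs' i, hb0, div_zero]
    exact_mod_cast this
  have hane : ∀ i ∈ p.support, a i ≠ 0 := by
    intro i hi ha0
    apply Polynomial.mem_support_iff.mp hi
    have : ((p.coeff i : E)) = 0 := by rw [hrs' i, ha0, zero_div]
    exact_mod_cast this
  set A := Algebra.adjoin K S with hA
  set d : ℕ → A := fun i => ⟨a i * ∏ j ∈ p.support.erase i, b j,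
    mul_mem (hmem _) (prod_mem fun j _ => hmem _)⟩ with hd
  set q : Polynomial A := ∑ i ∈ p.support, Polynomial.C (d i) * Polynomial.X ^ i with hq
  refine ⟨q, ?_, ?_⟩
  · -- q ≠ 0
    obtain ⟨i0, hi0⟩ := Polynomial.support_nonempty.mpr hp
    intro hq0
    have hco := congrArg (fun z : Polynomial A => z.coeff i0) hq0
    simp only [hq, Polynomial.finset_sum_coeff, Polynomial.coeff_C_mul, Polynomial.coeff_X_pow,
      Polynomial.coeff_zero] at hco
    rw [Finset.sum_eq_single i0 (fun i _ hi => by rw [if_neg (Ne.symm hi), mul_zero])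
      (fun h => absurd hi0 h), if_pos rfl, mul_one] at hco
    have hval : a i0 * ∏ j ∈ p.support.erase i0, b j = 0 := Subtype.ext_iff.mp hco
    exact mul_ne_zero (hane i0 hi0)
      (Finset.prod_ne_zero_iff.mpr fun j hj => hbne j (Finset.mem_of_mem_erase hj)) hval
  · -- aeval y q = 0
    have hav : Polynomial.aeval y q =
        ∑ i ∈ p.support, (a i * ∏ j ∈ p.support.erase i, b j) * y ^ i := by
      rw [hq, map_sum]
      refine Finset.sum_congr rfl fun i _ => ?_
      rw [map_mul, map_pow, Polynomial.aeval_X, Polynomial.aeval_C]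
      rfl
    have hstep : ∀ i ∈ p.support, (a i * ∏ j ∈ p.support.erase i, b j) * y ^ i =
        (∏ j ∈ p.support, b j) * (((p.coeff i : E)) * y ^ i) := by
      intro i hi
      rw [← Finset.mul_prod_erase p.support b hi, hrs' i]
      field_simp [hbne i hi]
    rw [hav, Finset.sum_congr rfl hstep, ← Finset.mul_sum]
    have h0 : ∑ i ∈ p.support, ((p.coeff i : E)) * y ^ i = 0 := by
      have heq : Polynomial.aeval y p = ∑ i ∈ p.support, ((p.coeff i : E)) * y ^ i := by
        rw [Polynomial.aeval_def, Polynomial.eval₂_eq_sum, Polynomial.sum_def]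
        rfl
      rw [← heq, hpy]
    rw [h0, mul_zero]



theorem lemA {K E : Type*} [Field K] [Field E] [Algebra K E] {u : E}
    (H : Transcendental K u) {n M : ℕ} {β : Fin n → K} (hβ : Function.Injective β) :
    LinearIndependent K (fun q : Fin n × Fin (M + 1) =>
      (u / (1 - algebraMap K E (β q.1) * u)) ^ ((q.2 : ℕ) + 1)) := by
  have hu0 : u ≠ 0 := fun h => H (by rw [h]; exact isAlgebraic_zero)
  have Hinv : Transcendental K u⁻¹ := fun halg => H (by simpa using halg.inv)
  have heq : ∀ j : Fin n, u / (1 - algebraMap K E (β j) * u) =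
      (u⁻¹ - algebraMap K E (β j))⁻¹ := by
    intro j
    have h1 : u⁻¹ - algebraMap K E (β j) = (1 - algebraMap K E (β j) * u) / u := by
      field_simp
    rw [h1, inv_div]
  have hfun : (fun q : Fin n × Fin (M + 1) =>
      (u / (1 - algebraMap K E (β q.1) * u)) ^ ((q.2 : ℕ) + 1)) =
      (fun q : Fin n × Fin (M + 1) =>
      ((u⁻¹ - algebraMap K E (β q.1))⁻¹) ^ ((q.2 : ℕ) + 1)) := by
    funext q; rw [heq]
  rw [hfun]
  exact lemA' Hinv hβ

universe v

set_option maxHeartbeats 1000000 in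
set_option synthInstance.maxHeartbeats 400000 in
theorem lemB {K : Type*} [Field K] {n M : ℕ} {β : Fin n → K} (hβ : Function.Injective β) :
    ∀ (t : ℕ) (E : Type v) [Field E] [Algebra K E] (x : Fin t → E),
      AlgebraicIndependent K x →
      LinearIndependent K (fun p : (Fin t → Fin n) × (Fin t → Fin (M + 1)) =>
        ∏ i, (x i / (1 - algebraMap K E (β (p.1 i)) * x i)) ^ ((p.2 i : ℕ) + 1)) := by
  intro t
  induction t with
  | zero =>
    intro E _ _ x _
    have hconst : (fun p : (Fin 0 → Fin n) × (Fin 0 → Fin (M + 1)) =>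
        ∏ i : Fin 0, (x i / (1 - algebraMap K E (β (p.1 i)) * x i)) ^ ((p.2 i : ℕ) + 1)) =
        fun _ => (1 : E) := by
      funext p; simp
    haveI : Unique ((Fin 0 → Fin n) × (Fin 0 → Fin (M + 1))) :=
      ⟨⟨(fun i => i.elim0, fun i => i.elim0)⟩, fun p => by
        ext i
        · exact i.elim0
        · exact i.elim0⟩
    rw [hconst]
    exact linearIndependent_unique_iff.mpr one_ne_zero
  | succ t ih =>
    intro E _ _ x hx
    set S : Set E := Set.range (fun i : Fin t => x i.castSucc) with hS
    set K' : IntermediateField K E := IntermediateField.adjoin K S with hK'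
    have hx1 : AlgebraicIndependent K (fun i : Fin t => x i.castSucc) :=
      hx.comp Fin.castSucc (Fin.castSucc_injective t)
    have hopt : AlgebraicIndependent K
        (fun o : Option (Fin t) => o.elim (x (Fin.last t)) (fun i => x i.castSucc)) := by
      have h2 := hx.comp finSuccEquivLast.symm finSuccEquivLast.symm.injective
      have h3 : (fun o : Option (Fin t) => o.elim (x (Fin.last t)) (fun i => x i.castSucc)) =
          x ∘ finSuccEquivLast.symm := by
        funext o; cases o <;> simp
      rw [h3]; exact h2
    have htr : Transcendental K' (x (Fin.last t)) :=
      transc_intermediate S _ ((hx1.option_iff_transcendental _).mp hopt)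
    have hxmem : ∀ i : Fin t, x i.castSucc ∈ K' :=
      fun i => IntermediateField.subset_adjoin _ _ ⟨i, rfl⟩
    set x' : Fin t → K' := fun i => ⟨x i.castSucc, hxmem i⟩ with hx'def
    have hx' : AlgebraicIndependent K x' := by
      apply AlgebraicIndependent.of_comp K'.val
      exact hx1
    have ha := ih K' x' hx'
    have hβ' : Function.Injective (fun j => algebraMap K K' (β j)) :=
      fun j1 j2 h => hβ ((algebraMap K K').injective h)
    have hb := lemA (K := K') (E := E) (M := M) htr (β := fun j => algebraMap K K' (β j)) hβ'
    have hsmul := linearIndependent_smul ha hb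
    set e : ((Fin (t+1) → Fin n) × (Fin (t+1) → Fin (M+1))) →
        (((Fin t → Fin n) × (Fin t → Fin (M+1))) × (Fin n × Fin (M+1))) := fun p =>
      ((fun i => p.1 i.castSucc, fun i => p.2 i.castSucc), (p.1 (Fin.last t), p.2 (Fin.last t)))
      with he_def
    have he : Function.Injective e := by
      intro p q h
      rw [Prod.ext_iff, Prod.ext_iff, Prod.ext_iff] at h
      obtain ⟨⟨h1, h2⟩, h3, h4⟩ := h
      ext i
      · exact Fin.lastCases (congrArg (·.val) h3) (fun i => congrArg (fun f => (f i).val) h1) i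
      · exact Fin.lastCases (congrArg (·.val) h4) (fun i => congrArg (fun f => (f i).val) h2) i
    have := hsmul.comp e he
    convert this using 1
    funext p
    show _ = (_ : K') • (_ : E)
    rw [Algebra.smul_def, Fin.prod_univ_castSucc]
    congr 1
    · rw [map_prod]
      refine Finset.prod_congr rfl fun i _ => ?_
      rw [map_pow, map_div₀, map_sub, map_one, map_mul, ← IsScalarTower.algebraMap_apply,
        IntermediateField.algebraMap_apply]


/-- Let F be a field, β₀ = 0, and β₁,…,β_J nonzero distinct elements of F.
Let M ≥ 0, s ≥ 1 be integers and X₁,…,X_s variables. Then the (J+1)^s (M+1)^s rational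
functions ∏_{i=1}^s (X_i/(1-β_{j_i} X_i))^{m_i+1}, indexed by (j₁,…,j_s) ∈ {0,…,J}^s and
(m₁,…,m_s) ∈ {0,…,M}^s, are linearly independent over F in F(X₁,…,X_s). -/
theorem stmt_0 (F : Type*) [Field F] (s J M : ℕ) (hs : 0 < s) (β : Fin (J + 1) → F)
    (hβ0 : β 0 = 0) (hβne : ∀ j : Fin (J + 1), j ≠ 0 → β j ≠ 0)
    (hβinj : Function.Injective β) :
    LinearIndependent F
      (fun p : (Fin s → Fin (J + 1)) × (Fin s → Fin (M + 1)) =>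
        ∏ i : Fin s,
          (algebraMap (MvPolynomial (Fin s) F) (FractionRing (MvPolynomial (Fin s) F))
              (MvPolynomial.X i) /
            (1 - algebraMap (MvPolynomial (Fin s) F) (FractionRing (MvPolynomial (Fin s) F))
              (MvPolynomial.C (β (p.1 i)) * MvPolynomial.X i))) ^ ((p.2 i : ℕ) + 1)) := by
  classical
  set E := FractionRing (MvPolynomial (Fin s) F) with hE
  set x : Fin s → E := fun i => algebraMap (MvPolynomial (Fin s) F) E (MvPolynomial.X i) with hxdef
  have hx : AlgebraicIndependent F x := by
    have h1 := (MvPolynomial.algebraicIndependent_X (Fin s) F).map'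
      (f := IsScalarTower.toAlgHom F (MvPolynomial (Fin s) F) E)
      (IsFractionRing.injective (MvPolynomial (Fin s) F) E)
    exact h1
  have h := lemB (M := M) hβinj s E x hx
  have hfun : (fun p : (Fin s → Fin (J + 1)) × (Fin s → Fin (M + 1)) =>
      ∏ i : Fin s,
        (algebraMap (MvPolynomial (Fin s) F) E (MvPolynomial.X i) /
          (1 - algebraMap (MvPolynomial (Fin s) F) E
            (MvPolynomial.C (β (p.1 i)) * MvPolynomial.X i))) ^ ((p.2 i : ℕ) + 1)) =
      (fun p : (Fin s → Fin (J + 1)) × (Fin s → Fin (M + 1)) =>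
      ∏ i : Fin s, (x i / (1 - algebraMap F E (β (p.1 i)) * x i)) ^ ((p.2 i : ℕ) + 1)) := by
    funext p
    refine Finset.prod_congr rfl fun i _ => ?_
    have hC : algebraMap (MvPolynomial (Fin s) F) E (MvPolynomial.C (β (p.1 i))) =
        algebraMap F E (β (p.1 i)) := by
      rw [IsScalarTower.algebraMap_apply F (MvPolynomial (Fin s) F) E,
        MvPolynomial.algebraMap_eq]
    rw [map_mul, hC]
  rw [hfun]
  exact h
end

section
/- Let F be a field, β₀ = 0 and β₁,…,β_J nonzero distinct elements of F, and M ≥ 0 an integer. Then the (J+1)(M+1) rational functions (X/(1-β_j X))^{m+1} for 0 ≤ j ≤ J and 0 ≤ m ≤ M are linearly independent over F in F(X). -/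
open Polynomial

/-- Let F be a field, β₀ = 0 and β₁,…,β_J nonzero distinct elements of F,
and M ≥ 0 an integer. Then the (J+1)(M+1) rational functions (X/(1-β_j X))^{m+1}
for 0 ≤ j ≤ J and 0 ≤ m ≤ M are linearly independent over F in F(X). -/
theorem stmt_1 (F : Type*) [Field F] (J M : ℕ) (β : Fin (J + 1) → F)
    (hβ0 : β 0 = 0) (hβne : ∀ j : Fin (J + 1), j ≠ 0 → β j ≠ 0)
    (hβinj : Function.Injective β) :
    LinearIndependent F (fun p : Fin (J + 1) × Fin (M + 1) =>
      (RatFunc.X / (1 - RatFunc.C (β p.1) * RatFunc.X)) ^ ((p.2 : ℕ) + 1)) := by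
  classical
  rw [Fintype.linearIndependent_iff]
  intro c hc
  -- the denominators
  set q : Fin (J + 1) → F[X] := fun j => 1 - C (β j) * X with hqdef
  have hqeval : ∀ j, (q j).eval 0 = 1 := by intro j; simp [hqdef]
  have hqne : ∀ j, q j ≠ 0 := by
    intro j h
    have := hqeval j
    rw [h] at this; simp at this
  -- the cleared-denominator polynomials
  set R : Fin (J + 1) → F[X] :=
    fun j => ∑ m : Fin (M + 1), c (j, m) • (q j ^ (M - (m : ℕ)) * X ^ ((m : ℕ) + 1)) with hRdef
  set W : Fin (J + 1) → F[X] :=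
    fun j => ∏ i ∈ Finset.univ.erase j, q i ^ (M + 1) with hWdef
  -- clearing denominators
  have key : ∑ j : Fin (J + 1), R j * W j = 0 := by
    apply RatFunc.algebraMap_injective F
    rw [map_zero, map_sum]
    have hAq : ∀ i, algebraMap F[X] (RatFunc F) (q i) = 1 - RatFunc.C (β i) * RatFunc.X := by
      intro i
      rw [hqdef]
      simp only [map_sub, map_one, map_mul, RatFunc.algebraMap_C, RatFunc.algebraMap_X]
    have hAqne : ∀ i, algebraMap F[X] (RatFunc F) (q i) ≠ 0 := by
      intro i h
      exact hqne i ((map_eq_zero_iff (algebraMap F[X] (RatFunc F)) (RatFunc.algebraMap_injective F)).1 h)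
    have term : ∀ j, algebraMap F[X] (RatFunc F) (R j * W j) =
        (∑ m : Fin (M + 1), c (j, m) •
          (RatFunc.X / (1 - RatFunc.C (β j) * RatFunc.X)) ^ ((m : ℕ) + 1)) *
        algebraMap F[X] (RatFunc F) (∏ i, q i ^ (M + 1)) := by
      intro j
      rw [map_mul, hRdef]
      simp only
      rw [map_sum, Finset.sum_mul, Finset.sum_mul]
      apply Finset.sum_congr rfl
      intro m _
      have hd := hAqne j
      have hkey : (RatFunc.X / algebraMap F[X] (RatFunc F) (q j)) ^ ((m : ℕ) + 1) *
          algebraMap F[X] (RatFunc F) (q j) ^ (M + 1) =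
          algebraMap F[X] (RatFunc F) (q j) ^ (M - (m : ℕ)) * RatFunc.X ^ ((m : ℕ) + 1) := by
        have hmM : (m : ℕ) ≤ M := Nat.lt_succ_iff.1 m.2
        calc (RatFunc.X / algebraMap F[X] (RatFunc F) (q j)) ^ ((m : ℕ) + 1) *
            algebraMap F[X] (RatFunc F) (q j) ^ (M + 1)
            = (RatFunc.X / algebraMap F[X] (RatFunc F) (q j)) ^ ((m : ℕ) + 1) *
              (algebraMap F[X] (RatFunc F) (q j) ^ ((m : ℕ) + 1) *
               algebraMap F[X] (RatFunc F) (q j) ^ (M - (m : ℕ))) := by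
              have h2 : ((m : ℕ) + 1) + (M - (m : ℕ)) = M + 1 := by omega
              rw [← pow_add, h2]
          _ = (RatFunc.X / algebraMap F[X] (RatFunc F) (q j) *
               algebraMap F[X] (RatFunc F) (q j)) ^ ((m : ℕ) + 1) *
              algebraMap F[X] (RatFunc F) (q j) ^ (M - (m : ℕ)) := by
              rw [mul_pow]
              ring
          _ = RatFunc.X ^ ((m : ℕ) + 1) *
              algebraMap F[X] (RatFunc F) (q j) ^ (M - (m : ℕ)) := by
              rw [div_mul_cancel₀ _ hd]
          _ = algebraMap F[X] (RatFunc F) (q j) ^ (M - (m : ℕ)) *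
              RatFunc.X ^ ((m : ℕ) + 1) := mul_comm _ _
      have hsplit : algebraMap F[X] (RatFunc F) (∏ i, q i ^ (M + 1)) =
          algebraMap F[X] (RatFunc F) (q j) ^ (M + 1) * algebraMap F[X] (RatFunc F) (W j) := by
        rw [hWdef]
        simp only
        rw [← Finset.mul_prod_erase Finset.univ (fun i => q i ^ (M + 1)) (Finset.mem_univ j)]
        simp only [map_mul, map_prod, map_pow]
      rw [Polynomial.smul_eq_C_mul, map_mul, map_mul, map_pow, map_pow, RatFunc.algebraMap_C,
        RatFunc.algebraMap_X, RatFunc.smul_eq_C_mul, hsplit, ← hAq j]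
      linear_combination (-(RatFunc.C (c (j, m)) * algebraMap F[X] (RatFunc F) (W j))) * hkey
    rw [Finset.sum_congr rfl fun j _ => term j, ← Finset.sum_mul]
    have hsum : ∑ j : Fin (J + 1), ∑ m : Fin (M + 1), c (j, m) •
        (RatFunc.X / (1 - RatFunc.C (β j) * RatFunc.X)) ^ ((m : ℕ) + 1) = 0 := by
      rw [Fintype.sum_prod_type] at hc
      exact hc
    rw [hsum, zero_mul]
  -- coefficient extraction
  have extract : ∀ j, R j = 0 → ∀ m : Fin (M + 1), c (j, m) = 0 := by
    intro j hR
    suffices h : ∀ n : ℕ, ∀ m : Fin (M + 1), (m : ℕ) ≤ n → c (j, m) = 0 by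
      intro m; exact h m m le_rfl
    intro n
    induction n using Nat.strong_induction_on with
    | _ n ih =>
      intro m hm
      have hcoeff : (R j).coeff ((m : ℕ) + 1) = 0 := by rw [hR]; simp
      have hc2 : ∑ m' : Fin (M + 1), c (j, m') *
          (if ((m' : ℕ) + 1) ≤ ((m : ℕ) + 1) then
            (q j ^ (M - (m' : ℕ))).coeff ((m : ℕ) + 1 - ((m' : ℕ) + 1)) else 0) = 0 := by
        have hc3 : (R j).coeff ((m : ℕ) + 1) = ∑ m' : Fin (M + 1), c (j, m') *
            (if ((m' : ℕ) + 1) ≤ ((m : ℕ) + 1) then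
              (q j ^ (M - (m' : ℕ))).coeff ((m : ℕ) + 1 - ((m' : ℕ) + 1)) else 0) := by
          rw [hRdef]
          simp only
          rw [Polynomial.finset_sum_coeff]
          apply Finset.sum_congr rfl
          intro m' _
          rw [Polynomial.coeff_smul, smul_eq_mul, Polynomial.coeff_mul_X_pow']
        exact hc3.symm.trans hcoeff
      rw [Finset.sum_eq_single m] at hc2
      · have h0 : (q j ^ (M - (m : ℕ))).coeff 0 = 1 := by
          rw [Polynomial.coeff_zero_eq_eval_zero, Polynomial.eval_pow, hqeval, one_pow]
        simpa [h0] using hc2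
      · intro b _ hb
        have hbm : (b : ℕ) ≠ (m : ℕ) := fun h => hb (Fin.ext h)
        rcases lt_or_gt_of_ne hbm with h | h
        · rw [ih (b : ℕ) (lt_of_lt_of_le h hm) b le_rfl, zero_mul]
        · rw [if_neg (by omega), mul_zero]
      · intro h; exact absurd (Finset.mem_univ m) h
  -- coprimality
  have hcoprime : ∀ j i : Fin (J + 1), j ≠ 0 → i ≠ j → IsCoprime (q j) (q i) := by
    intro j i hj hij
    by_cases hi0 : β i = 0
    · rw [hqdef]; simp only [hi0, map_zero, zero_mul, sub_zero]; exact isCoprime_one_right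
    · have hne : β i - β j ≠ 0 := sub_ne_zero.2 fun h => hij (hβinj h)
      refine ⟨C (β i / (β i - β j)), C (-(β j) / (β i - β j)), ?_⟩
      have e1 : β i / (β i - β j) + -(β j) / (β i - β j) = 1 := by
        field_simp
        ring
      have e2 : β i / (β i - β j) * β j + -(β j) / (β i - β j) * β i = 0 := by
        field_simp
        ring
      have key2 : C (β i / (β i - β j)) * (1 - C (β j) * X) +
          C (-(β j) / (β i - β j)) * (1 - C (β i) * X) =
          C (β i / (β i - β j) + -(β j) / (β i - β j)) -
          C (β i / (β i - β j) * β j + -(β j) / (β i - β j) * β i) * X := by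
        simp only [map_add, map_mul]
        ring
      rw [hqdef]
      simp only
      rw [key2, e1, e2]
      simp
  have hcop : ∀ j, j ≠ 0 → IsCoprime (q j ^ (M + 1)) (W j) := by
    intro j hj
    apply IsCoprime.pow_left
    rw [hWdef]
    apply IsCoprime.prod_right
    intro i hi
    exact (hcoprime j i hj (Finset.mem_erase.1 hi).1).pow_right
  -- divisibility for each j
  have hdvd : ∀ j : Fin (J + 1), q j ^ (M + 1) ∣ R j * W j := by
    intro j
    have h1 : R j * W j = -∑ i ∈ Finset.univ.erase j, R i * W i := by
      rw [eq_neg_iff_add_eq_zero,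
        Finset.add_sum_erase _ (fun i => R i * W i) (Finset.mem_univ j)]
      exact key
    rw [h1]
    apply dvd_neg.2
    apply Finset.dvd_sum
    intro i hi
    have hji : j ∈ Finset.univ.erase i := by
      simp only [Finset.mem_erase, Finset.mem_univ, and_true] at hi ⊢
      exact fun h => hi h.symm
    exact dvd_mul_of_dvd_right (Finset.dvd_prod_of_mem _ hji) _
  -- degree bound
  have hqdeg : ∀ j, (q j).natDegree ≤ 1 := by
    intro j
    have h : q j = C (-(β j)) * X + C 1 := by rw [hqdef]; simp only [map_neg, map_one]; ring
    rw [h]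
    exact Polynomial.natDegree_linear_le
  have hdeg : ∀ j, (R j).natDegree ≤ M + 1 := by
    intro j
    rw [hRdef]
    simp only
    apply Polynomial.natDegree_sum_le_of_forall_le
    intro m _
    apply le_trans (Polynomial.natDegree_smul_le _ _)
    apply le_trans Polynomial.natDegree_mul_le
    have h1 : (q j ^ (M - (m : ℕ))).natDegree ≤ (M - (m : ℕ)) * 1 :=
      le_trans Polynomial.natDegree_pow_le (Nat.mul_le_mul_left _ (hqdeg j))
    have h2 : ((X : F[X]) ^ ((m : ℕ) + 1)).natDegree = (m : ℕ) + 1 :=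
      Polynomial.natDegree_X_pow _
    have hmM : (m : ℕ) ≤ M := Nat.lt_succ_iff.1 m.2
    omega
  -- R j = 0 for j ≠ 0
  have hR0 : ∀ j, j ≠ 0 → R j = 0 := by
    intro j hj
    have hd : q j ^ (M + 1) ∣ R j := (hcop j hj).dvd_of_dvd_mul_right (hdvd j)
    obtain ⟨s, hs⟩ := hd
    by_cases hs0 : s = 0
    · rw [hs, hs0, mul_zero]
    · exfalso
      have hqj : (q j).natDegree = 1 := by
        have h : q j = C (-(β j)) * X + C 1 := by rw [hqdef]; simp only [map_neg, map_one]; ring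
        rw [h]
        exact Polynomial.natDegree_linear (neg_ne_zero.2 (hβne j hj))
      have hdRs : (R j).natDegree = (M + 1) + s.natDegree := by
        rw [hs, Polynomial.natDegree_mul (pow_ne_zero _ (hqne j)) hs0,
          Polynomial.natDegree_pow, hqj, mul_one]
      have hsdeg : s.natDegree = 0 := by have := hdeg j; omega
      have heval : (R j).eval 0 = 0 := by
        rw [hRdef]
        simp only
        rw [Polynomial.eval_finset_sum]
        apply Finset.sum_eq_zero
        intro m _
        simp
      have hse : s.eval 0 = 0 := by
        rw [hs, Polynomial.eval_mul, Polynomial.eval_pow, hqeval, one_pow, one_mul] at heval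
        exact heval
      obtain ⟨a, ha⟩ := Polynomial.natDegree_eq_zero.1 hsdeg
      rw [← ha] at hse
      simp only [Polynomial.eval_C] at hse
      exact hs0 (by rw [← ha, hse, map_zero])
  -- deduce R 0 = 0
  have hR00 : R 0 = 0 := by
    have h1 : R 0 * W 0 = -∑ i ∈ Finset.univ.erase 0, R i * W i := by
      rw [eq_neg_iff_add_eq_zero,
        Finset.add_sum_erase _ (fun i => R i * W i) (Finset.mem_univ (0 : Fin (J+1)))]
      exact key
    have h2 : ∀ i ∈ Finset.univ.erase (0 : Fin (J+1)), R i * W i = 0 := by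
      intro i hi
      rw [hR0 i (Finset.mem_erase.1 hi).1, zero_mul]
    rw [Finset.sum_eq_zero h2, neg_zero] at h1
    have hW : W 0 ≠ 0 := by
      apply Finset.prod_ne_zero_iff.2
      intro i _
      exact pow_ne_zero _ (hqne i)
    exact (mul_eq_zero.1 h1).resolve_right hW
  intro p
  rcases p with ⟨j, m⟩
  by_cases hj : j = 0
  · subst hj; exact extract 0 hR00 m
  · exact extract j (hR0 j hj) m
end

section
/- Let Ω be an n×n matrix with nonnegative integer entries, nonsingular with no eigenvalue a root of unity. Let P ∈ C[z₁,…,z_n] be a nonzero polynomial over a field C of characteristic 0. If P(Ωz) divides P(z)·z₁^{I₁}⋯z_n^{I_n} in C[z₁,…,z_n] for some nonnegative integers I₁,…,I_n, then P is a monomial c·z₁^{a₁}⋯z_n^{a_n}. -/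
set_option synthInstance.maxHeartbeats 400000
set_option maxHeartbeats 1000000

open MvPolynomial Polynomial Matrix

namespace Stmt8Aux

variable {n : ℕ}

/-- weight of an exponent vector -/
def w (u : Fin n → ℤ) (a : Fin n →₀ ℕ) : ℤ := ∑ i, u i * (a i : ℤ)

lemma w_add (u : Fin n → ℤ) (a b : Fin n →₀ ℕ) : w u (a + b) = w u a + w u b := by
  unfold w
  rw [← Finset.sum_add_distrib]
  refine Finset.sum_congr rfl fun i _ => ?_
  simp [Finsupp.add_apply]; ring

lemma w_neg (u : Fin n → ℤ) (a : Fin n →₀ ℕ) : w (-u) a = - w u a := by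
  simp [w, ← Finset.sum_neg_distrib]

lemma w_single (j : Fin n) (a : Fin n →₀ ℕ) : w (Pi.single j 1) a = (a j : ℤ) := by
  unfold w
  simp [Pi.single_apply, ite_mul]

section Width

variable {C : Type*} [CommRing C] [IsDomain C]

/-- max of the weight over the support -/
noncomputable def maxw (u : Fin n → ℤ) (f : MvPolynomial (Fin n) C)
    (hf : f.support.Nonempty) : ℤ :=
  f.support.sup' hf (w u)

lemma le_maxw {u : Fin n → ℤ} {f : MvPolynomial (Fin n) C} (hf : f.support.Nonempty)
    {a : Fin n →₀ ℕ} (ha : a ∈ f.support) : w u a ≤ maxw u f hf :=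
  Finset.le_sup' _ ha

lemma maxw_mul (u : Fin n → ℤ) (f g : MvPolynomial (Fin n) C)
    (hf : f.support.Nonempty) (hg : g.support.Nonempty) (hfg : (f * g).support.Nonempty) :
    maxw u (f * g) hfg = maxw u f hf + maxw u g hg := by
  classical
  apply le_antisymm
  · apply Finset.sup'_le
    intro c hc
    have := MvPolynomial.support_mul f g hc
    rw [Finset.mem_add] at this
    obtain ⟨x, hx, y, hy, rfl⟩ := this
    rw [w_add]
    exact add_le_add (Finset.le_sup' _ hx) (Finset.le_sup' _ hy)
  · set Mf := f.support.filter (fun x => w u x = maxw u f hf) with hMf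
    set Mg := g.support.filter (fun x => w u x = maxw u g hg) with hMg
    obtain ⟨a0, ha0, ha0w⟩ := Finset.exists_mem_eq_sup' hf (w u)
    obtain ⟨b0, hb0, hb0w⟩ := Finset.exists_mem_eq_sup' hg (w u)
    have hMfne : Mf.Nonempty := ⟨a0, Finset.mem_filter.mpr ⟨ha0, ha0w.symm⟩⟩
    have hMgne : Mg.Nonempty := ⟨b0, Finset.mem_filter.mpr ⟨hb0, hb0w.symm⟩⟩
    obtain ⟨α, hα, hαmax⟩ := Finset.exists_max_image Mf (fun x => toLex x) hMfne
    obtain ⟨β, hβ, hβmax⟩ := Finset.exists_max_image Mg (fun x => toLex x) hMgne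
    have hαs : α ∈ f.support := (Finset.mem_filter.mp hα).1
    have hβs : β ∈ g.support := (Finset.mem_filter.mp hβ).1
    have hαw : w u α = maxw u f hf := (Finset.mem_filter.mp hα).2
    have hβw : w u β = maxw u g hg := (Finset.mem_filter.mp hβ).2
    have hcoeff : MvPolynomial.coeff (α + β) (f * g)
        = MvPolynomial.coeff α f * MvPolynomial.coeff β g := by
      rw [MvPolynomial.coeff_mul]
      apply Finset.sum_eq_single (α, β)
      · rintro ⟨x, y⟩ hxy hne
        rw [Finset.HasAntidiagonal.mem_antidiagonal] at hxy
        by_contra hc0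
        have hx : x ∈ f.support := by
          rw [MvPolynomial.mem_support_iff]; intro h; apply hc0; rw [h, zero_mul]
        have hy : y ∈ g.support := by
          rw [MvPolynomial.mem_support_iff]; intro h; apply hc0; rw [h, mul_zero]
        have hwx : w u x ≤ maxw u f hf := Finset.le_sup' _ hx
        have hwy : w u y ≤ maxw u g hg := Finset.le_sup' _ hy
        have hsum : w u x + w u y = w u α + w u β := by
          rw [← w_add, ← w_add, hxy]
        have hwx' : w u x = maxw u f hf := by linarith
        have hwy' : w u y = maxw u g hg := by linarith
        have h1 : toLex x ≤ toLex α := hαmax x (Finset.mem_filter.mpr ⟨hx, hwx'⟩)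
        have h2 : toLex y ≤ toLex β := hβmax y (Finset.mem_filter.mpr ⟨hy, hwy'⟩)
        have hadd : toLex x + toLex y = toLex α + toLex β := by
          rw [← toLex_add, ← toLex_add, hxy]
        have hxα : toLex x = toLex α := by
          rcases lt_or_eq_of_le h1 with h | h
          · exact absurd hadd (ne_of_lt (add_lt_add_of_lt_of_le h h2))
          · exact h
        have hx' : x = α := toLex.injective hxα
        have hy' : y = β := by
          rw [hx'] at hxy; exact add_left_cancel hxy
        exact hne (Prod.ext hx' hy')
      · intro h
        simp [Finset.mem_antidiagonal] at h
    have : (α + β) ∈ (f * g).support := by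
      rw [MvPolynomial.mem_support_iff, hcoeff]
      exact mul_ne_zero (MvPolynomial.mem_support_iff.mp hαs)
        (MvPolynomial.mem_support_iff.mp hβs)
    have hle := Finset.le_sup' (w u) this
    rw [w_add, hαw, hβw] at hle
    exact hle

/-- width of a polynomial in direction u -/
noncomputable def width (u : Fin n → ℤ) (f : MvPolynomial (Fin n) C)
    (hf : f.support.Nonempty) : ℤ :=
  maxw u f hf + maxw (-u) f hf

lemma sub_le_width {u : Fin n → ℤ} {f : MvPolynomial (Fin n) C} (hf : f.support.Nonempty)
    {a b : Fin n →₀ ℕ} (ha : a ∈ f.support) (hb : b ∈ f.support) :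
    w u a - w u b ≤ width u f hf := by
  have h1 : w u a ≤ maxw u f hf := le_maxw hf ha
  have h2 : w (-u) b ≤ maxw (-u) f hf := le_maxw hf hb
  rw [w_neg] at h2
  unfold width
  linarith

lemma width_nonneg {u : Fin n → ℤ} {f : MvPolynomial (Fin n) C} (hf : f.support.Nonempty) :
    0 ≤ width u f hf := by
  have h := hf
  obtain ⟨a, ha⟩ := h
  have := sub_le_width (u := u) hf ha ha
  simpa using this

lemma width_mul (u : Fin n → ℤ) (f g : MvPolynomial (Fin n) C)
    (hf : f.support.Nonempty) (hg : g.support.Nonempty) (hfg : (f * g).support.Nonempty) :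
    width u (f * g) hfg = width u f hf + width u g hg := by
  unfold width
  rw [maxw_mul u f g hf hg hfg, maxw_mul (-u) f g hf hg hfg]
  ring

lemma width_dvd_le (u : Fin n → ℤ) (f g : MvPolynomial (Fin n) C)
    (h : f ∣ g) (hf : f.support.Nonempty) (hg : g.support.Nonempty) :
    width u f hf ≤ width u g hg := by
  obtain ⟨q, rfl⟩ := h
  have hfq : (f * q).support.Nonempty := hg
  have hq : q.support.Nonempty := by
    rw [MvPolynomial.support_nonempty] at *
    intro h0
    exact hfq (by rw [h0, mul_zero])
  rw [width_mul u f q hf hq hfq]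
  have := width_nonneg (u := u) hq
  linarith

lemma maxw_monomial (u : Fin n → ℤ) (e : Fin n →₀ ℕ) {c : C} (hc : c ≠ 0)
    (h : (monomial e c : MvPolynomial (Fin n) C).support.Nonempty) :
    maxw u (monomial e c) h = w u e := by
  apply le_antisymm
  · apply Finset.sup'_le
    intro x hx
    have hx' : x = e := by
      have := MvPolynomial.support_monomial_subset hx
      simpa using this
    rw [hx']
  · apply le_maxw h
    rw [MvPolynomial.mem_support_iff, MvPolynomial.coeff_monomial, if_pos rfl]
    exact hc

lemma width_monomial (u : Fin n → ℤ) (e : Fin n →₀ ℕ) {c : C} (hc : c ≠ 0)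
    (h : (monomial e c : MvPolynomial (Fin n) C).support.Nonempty) :
    width u (monomial e c) h = 0 := by
  unfold width
  rw [maxw_monomial u e hc h, maxw_monomial (-u) e hc h, w_neg]
  ring

end Width

section Subst

variable (Ω : Matrix (Fin n) (Fin n) ℕ)

/-- the induced map on exponents -/
noncomputable def Bf (a : Fin n →₀ ℕ) : Fin n →₀ ℕ :=
  Finsupp.equivFunOnFinite.symm (fun j => ∑ i, a i * Ω i j)

lemma Bf_apply (a : Fin n →₀ ℕ) (j : Fin n) : Bf Ω a j = ∑ i, a i * Ω i j := by
  simp [Bf]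

variable {C : Type*} [CommRing C] [IsDomain C]

lemma sigma_monomial (a : Fin n →₀ ℕ) (c : C) :
    MvPolynomial.aeval (fun i : Fin n => ∏ j : Fin n, MvPolynomial.X j ^ Ω i j)
      (monomial a c) = monomial (Bf Ω a) c := by
  rw [MvPolynomial.aeval_monomial, MvPolynomial.monomial_eq]
  rw [Finsupp.prod_fintype _ _ (fun i => pow_zero _), Finsupp.prod_fintype _ _ (fun i => pow_zero _)]
  have : (algebraMap C (MvPolynomial (Fin n) C)) c = MvPolynomial.C c := rfl
  rw [this]
  congr 1
  calc ∏ i : Fin n, (∏ j : Fin n, (X j : MvPolynomial (Fin n) C) ^ Ω i j) ^ a i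
      = ∏ i : Fin n, ∏ j : Fin n, ((X j : MvPolynomial (Fin n) C) ^ (Ω i j * a i)) := by
        refine Finset.prod_congr rfl fun i _ => ?_
        rw [← Finset.prod_pow]
        exact Finset.prod_congr rfl fun j _ => by rw [← pow_mul]
    _ = ∏ j : Fin n, ∏ i : Fin n, ((X j : MvPolynomial (Fin n) C) ^ (Ω i j * a i)) :=
        Finset.prod_comm
    _ = ∏ j : Fin n, (X j : MvPolynomial (Fin n) C) ^ (Bf Ω a j) := by
        refine Finset.prod_congr rfl fun j _ => ?_
        rw [Finset.prod_pow_eq_pow_sum, Bf_apply]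
        congr 1
        exact Finset.sum_congr rfl fun i _ => by rw [mul_comm]


lemma coeff_sigma (hB : Function.Injective (Bf Ω)) (P : MvPolynomial (Fin n) C)
    (a : Fin n →₀ ℕ) :
    MvPolynomial.coeff (Bf Ω a)
      (MvPolynomial.aeval (fun i : Fin n => ∏ j : Fin n, MvPolynomial.X j ^ Ω i j) P)
      = MvPolynomial.coeff a P := by
  conv_lhs => rw [P.as_sum, map_sum]
  rw [MvPolynomial.coeff_sum]
  simp_rw [sigma_monomial, MvPolynomial.coeff_monomial]
  rw [Finset.sum_eq_single a]
  · rw [if_pos rfl]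
  · intro b hb hne
    rw [if_neg (fun h => hne (hB h))]
  · intro ha
    rw [if_pos rfl]
    exact (MvPolynomial.notMem_support_iff.mp ha)

end Subst

section Dyn


lemma vecMul_cast {R S : Type*} [CommRing R] [CommRing S] (φ : R →+* S)
    (v : Fin n → R) (M : Matrix (Fin n) (Fin n) R) :
    (fun j => φ ((v ᵥ* M) j)) = (fun i => φ (v i)) ᵥ* M.map φ := by
  funext j
  simp [Matrix.vecMul, dotProduct, map_sum, Matrix.map_apply]

lemma vecMul_cast_pow {R S : Type*} [CommRing R] [CommRing S] (φ : R →+* S)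
    (v : Fin n → R) (M : Matrix (Fin n) (Fin n) R) (k : ℕ) :
    (fun i => φ (v i)) ᵥ* (M.map φ) ^ k = fun j => φ ((v ᵥ* M ^ k) j) := by
  have h1 := vecMul_cast φ v (M ^ k)
  have h2 : (M ^ k).map φ = (M.map φ) ^ k := by
    have := map_pow (RingHom.mapMatrix φ : Matrix (Fin n) (Fin n) R →+* _) M k
    simpa [RingHom.mapMatrix_apply] using this
  rw [h2] at h1
  exact h1.symm

lemma vecMul_inj {K : Type*} [Field K] {M : Matrix (Fin n) (Fin n) K}
    (h : M.det ≠ 0) {x : Fin n → K} (hx : x ᵥ* M = 0) : x = 0 := by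
  have := congrArg (fun y => y ᵥ* M⁻¹) hx
  simpa [Matrix.vecMul_vecMul, Matrix.mul_nonsing_inv M (isUnit_iff_ne_zero.mpr h),
    Matrix.zero_vecMul] using this

lemma det_aeval_prod_roots (Ac : Matrix (Fin n) (Fin n) ℂ) (s : Multiset ℂ) :
    ((Polynomial.aeval Ac) (s.map (fun ζ => Polynomial.X - Polynomial.C ζ)).prod).det
      = (s.map (fun ζ => (Ac - algebraMap ℂ (Matrix (Fin n) (Fin n) ℂ) ζ).det)).prod := by
  induction s using Multiset.induction with
  | empty => simp
  | cons a s ih =>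
    rw [Multiset.map_cons, Multiset.prod_cons, _root_.map_mul, Matrix.det_mul,
      Multiset.map_cons, Multiset.prod_cons, ← ih]
    congr 1
    simp [map_sub]

lemma dyn (Ω : Matrix (Fin n) (Fin n) ℕ)
    (hdet : (Ω.map (Nat.cast : ℕ → ℚ)).det ≠ 0)
    (hroot : ∀ μ : ℂ, (Ω.map (Nat.cast : ℕ → ℂ)).charpoly.IsRoot μ →
      ∀ k : ℕ, 0 < k → μ ^ k ≠ 1)
    (v : Fin n → ℤ) (hv : v ≠ 0) (B : ℤ) :
    ∃ (k : ℕ) (j : Fin n), B < |(v ᵥ* (Ω.map (Nat.cast : ℕ → ℤ))^k) j| := by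
  classical
  by_contra hcon
  push_neg at hcon
  set A : Matrix (Fin n) (Fin n) ℤ := Ω.map (Nat.cast : ℕ → ℤ) with hA
  have hAQ : A.map (Int.castRingHom ℚ) = Ω.map (Nat.cast : ℕ → ℚ) := by
    ext i j; simp [hA, Matrix.map_apply]
  have hAC : A.map (Int.castRingHom ℂ) = Ω.map (Nat.cast : ℕ → ℂ) := by
    ext i j; simp [hA, Matrix.map_apply]
  set f : ℕ → (Fin n → ℤ) := fun k => v ᵥ* A ^ k with hf
  have hfin : (Set.pi Set.univ (fun _ : Fin n => Set.Icc (-B) B)).Finite :=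
    Set.Finite.pi (fun _ => Set.finite_Icc _ _)
  have hmaps : Set.MapsTo f Set.univ (Set.pi Set.univ (fun _ : Fin n => Set.Icc (-B) B)) := by
    intro k _ j _
    exact abs_le.mp (hcon k j)
  obtain ⟨k, -, l, -, hkl, heq⟩ :=
    Set.infinite_univ.exists_ne_map_eq_of_mapsTo hmaps hfin
  have key : ∀ k l : ℕ, k < l → f k = f l → False := by
    intro k l hlt heq
    have hm0 : 0 < l - k := by omega
    set m := l - k with hm
    have hlk : l = k + m := by omega
    set x : Fin n → ℤ := v ᵥ* A ^ k with hx
    have hxx : x = x ᵥ* A ^ m := by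
      calc x = v ᵥ* A ^ l := heq
        _ = (v ᵥ* A ^ k) ᵥ* A ^ m := by rw [hlk, pow_add, ← Matrix.vecMul_vecMul]
        _ = x ᵥ* A ^ m := rfl
    have hx0 : x ≠ 0 := by
      intro h0
      have hcast : (fun i => (Int.castRingHom ℚ) (v i)) ᵥ* (A.map (Int.castRingHom ℚ)) ^ k = 0 := by
        rw [vecMul_cast_pow]
        funext j
        rw [← hx, h0]
        simp
      have hdet' : ((A.map (Int.castRingHom ℚ)) ^ k).det ≠ 0 := by
        rw [Matrix.det_pow, hAQ]
        exact pow_ne_zero _ hdet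
      have hv0 := vecMul_inj hdet' hcast
      obtain ⟨i, hi⟩ := Function.ne_iff.mp hv
      have := congrFun hv0 i
      simp at this
      exact hi this
    set Ac : Matrix (Fin n) (Fin n) ℂ := Ω.map (Nat.cast : ℕ → ℂ) with hAc
    set xc : Fin n → ℂ := fun i => (x i : ℂ) with hxc
    have hxcx : xc ᵥ* Ac ^ m = xc := by
      rw [← hAC]
      show (fun i => (Int.castRingHom ℂ) (x i)) ᵥ* (A.map (Int.castRingHom ℂ)) ^ m
        = fun i => (Int.castRingHom ℂ) (x i)
      rw [vecMul_cast_pow]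
      funext j
      rw [← hxx]
    have hxc0 : xc ≠ 0 := by
      intro h0
      apply hx0
      funext i
      have := congrFun h0 i
      simp only [hxc, Pi.zero_apply, Int.cast_eq_zero] at this
      simpa using this
    have hker : xc ᵥ* (Ac ^ m - 1) = 0 := by
      rw [Matrix.vecMul_sub, hxcx, Matrix.vecMul_one, sub_self]
    have hdet0 : (Ac ^ m - 1).det = 0 :=
      (Matrix.exists_vecMul_eq_zero_iff).mp ⟨xc, hxc0, hker⟩
    set p : ℂ[X] := Polynomial.X ^ m - Polynomial.C 1 with hp
    have hmonic : p.Monic := monic_X_pow_sub_C 1 (by omega)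
    have hfact : p = (p.roots.map fun ζ => Polynomial.X - Polynomial.C ζ).prod :=
      (IsAlgClosed.splits p).eq_prod_roots_of_monic hmonic
    have haeval : (Polynomial.aeval Ac) p = Ac ^ m - 1 := by
      simp [hp]
    have hproddet : (p.roots.map
        (fun ζ => (Ac - algebraMap ℂ (Matrix (Fin n) (Fin n) ℂ) ζ).det)).prod = 0 := by
      rw [← det_aeval_prod_roots, ← hfact, haeval, hdet0]
    obtain ⟨ζ, hζroot, hζd⟩ := Multiset.mem_map.mp (Multiset.prod_eq_zero_iff.mp hproddet)
    have hζm : ζ ^ m = 1 := by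
      have hr := Polynomial.isRoot_of_mem_roots hζroot
      rw [Polynomial.IsRoot] at hr
      simp only [hp, Polynomial.eval_sub, Polynomial.eval_pow, Polynomial.eval_X,
        Polynomial.eval_C] at hr
      rwa [sub_eq_zero] at hr
    have hcharroot : Ac.charpoly.IsRoot ζ := by
      have hevaldet : Polynomial.eval ζ (Matrix.charmatrix Ac).det
          = ((Matrix.charmatrix Ac).map (Polynomial.eval ζ)).det := by
        have := RingHom.map_det (Polynomial.evalRingHom ζ) (Matrix.charmatrix Ac)
        simpa [Polynomial.coe_evalRingHom] using this
      have hmapeq : (Matrix.charmatrix Ac).map (Polynomial.eval ζ)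
          = algebraMap ℂ (Matrix (Fin n) (Fin n) ℂ) ζ - Ac := by
        ext i j
        by_cases h : i = j
        · subst h
          simp [Matrix.charmatrix_apply_eq, Matrix.map_apply, Matrix.algebraMap_matrix_apply]
        · simp [Matrix.charmatrix_apply_ne _ _ _ h, Matrix.map_apply,
            Matrix.algebraMap_matrix_apply, h]
      have hneg : algebraMap ℂ (Matrix (Fin n) (Fin n) ℂ) ζ - Ac
          = -(Ac - algebraMap ℂ (Matrix (Fin n) (Fin n) ℂ) ζ) := (neg_sub _ _).symm
      rw [Polynomial.IsRoot, Matrix.charpoly, hevaldet, hmapeq, hneg, Matrix.det_neg]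
      rw [hζd, mul_zero]
    exact hroot ζ hcharroot m hm0 hζm
  rcases hkl.lt_or_gt with h | h
  · exact key k l h heq
  · exact key l k h heq.symm

end Dyn

end Stmt8Aux

/-- Let Ω be an n×n matrix with nonnegative integer entries, nonsingular
with no eigenvalue a root of unity. Let P be a nonzero polynomial in C[z₁,…,z_n] over a
field C of characteristic 0. If P(Ωz) divides P(z)·z₁^{I₁}⋯z_n^{I_n} for some
nonnegative integers I₁,…,I_n, then P is a monomial c·z₁^{a₁}⋯z_n^{a_n}. -/
theorem stmt_8 (n : ℕ) (Ω : Matrix (Fin n) (Fin n) ℕ)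
    (hdet : (Ω.map (Nat.cast : ℕ → ℚ)).det ≠ 0)
    (hroot : ∀ μ : ℂ, (Ω.map (Nat.cast : ℕ → ℂ)).charpoly.IsRoot μ →
      ∀ k : ℕ, 0 < k → μ ^ k ≠ 1)
    (C : Type*) [Field C] [CharZero C] (P : MvPolynomial (Fin n) C) (hP : P ≠ 0)
    (I : Fin n → ℕ)
    (hdvd : MvPolynomial.aeval (fun i : Fin n => ∏ j : Fin n, MvPolynomial.X j ^ Ω i j) P ∣
      P * ∏ i : Fin n, MvPolynomial.X i ^ I i) :
    ∃ (a : Fin n →₀ ℕ) (c : C), P = MvPolynomial.monomial a c := by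
  classical
  by_cases hcard : P.support.card ≤ 1
  · -- P is a monomial
    obtain ⟨d, hd⟩ := MvPolynomial.support_nonempty.mpr hP
    refine ⟨d, MvPolynomial.coeff d P, ?_⟩
    have hsupp : P.support = {d} := by
      apply Finset.eq_singleton_iff_unique_mem.mpr
      exact ⟨hd, fun x hx => Finset.card_le_one.mp hcard x hx d hd⟩
    conv_lhs => rw [P.as_sum]
    rw [hsupp, Finset.sum_singleton]
  · exfalso
    rw [not_le] at hcard
    obtain ⟨a, ha, b, hb, hab⟩ := Finset.one_lt_card.mp hcard
    have hPne : P.support.Nonempty := MvPolynomial.support_nonempty.mpr hP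
    -- injectivity of the exponent map
    have hBinj : Function.Injective (Stmt8Aux.Bf Ω) := by
      intro x y hxy
      have hvec : (fun i => ((x i : ℕ) : ℚ)) ᵥ* Ω.map (Nat.cast : ℕ → ℚ)
          = (fun i => ((y i : ℕ) : ℚ)) ᵥ* Ω.map (Nat.cast : ℕ → ℚ) := by
        funext j
        have h1 := congrArg (fun (f : Fin n →₀ ℕ) => ((f j : ℕ) : ℚ)) hxy
        simp only [Stmt8Aux.Bf_apply] at h1
        push_cast at h1
        simpa [Matrix.vecMul, dotProduct, Matrix.map_apply] using h1
      have hsub : ((fun i => ((x i : ℕ) : ℚ)) - fun i => ((y i : ℕ) : ℚ)) ᵥ*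
          Ω.map (Nat.cast : ℕ → ℚ) = 0 := by
        rw [Matrix.sub_vecMul, hvec, sub_self]
      have := Stmt8Aux.vecMul_inj hdet hsub
      ext i
      have h2 := congrFun this i
      simp only [Pi.sub_apply, Pi.zero_apply, sub_eq_zero] at h2
      exact_mod_cast h2
    -- the substitution as a function
    set g : Fin n → MvPolynomial (Fin n) C :=
      fun i : Fin n => ∏ j : Fin n, MvPolynomial.X j ^ Ω i j with hg
    set σ : MvPolynomial (Fin n) C → MvPolynomial (Fin n) C :=
      fun f => MvPolynomial.aeval g f with hσ
    -- coefficients of iterates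
    have hcoeffit : ∀ (k : ℕ) (Q : MvPolynomial (Fin n) C) (c : Fin n →₀ ℕ),
        MvPolynomial.coeff ((Stmt8Aux.Bf Ω)^[k] c) (σ^[k] Q) = MvPolynomial.coeff c Q := by
      intro k
      induction k with
      | zero => intro Q c; simp
      | succ k ih =>
        intro Q c
        rw [Function.iterate_succ_apply', Function.iterate_succ_apply']
        have := Stmt8Aux.coeff_sigma Ω hBinj (σ^[k] Q) ((Stmt8Aux.Bf Ω)^[k] c)
        rw [hσ]
        rw [this]
        exact ih Q c
    -- ∏ X i ^ I i is a monomial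
    set e₀ : Fin n →₀ ℕ := Finsupp.equivFunOnFinite.symm I with he₀
    have hprodI : (∏ i : Fin n, MvPolynomial.X i ^ I i : MvPolynomial (Fin n) C)
        = MvPolynomial.monomial e₀ 1 := by
      rw [← MvPolynomial.prod_X_pow_eq_monomial]
      have hstep : ∏ i : Fin n, (MvPolynomial.X i : MvPolynomial (Fin n) C) ^ I i
          = ∏ i : Fin n, MvPolynomial.X i ^ e₀ i := by
        refine Finset.prod_congr rfl fun i _ => ?_
        have hi : e₀ i = I i := by simp [he₀]
        rw [hi]
      rw [hstep]
      symm
      apply Finset.prod_subset (Finset.subset_univ _)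
      intro x _ hx
      rw [Finsupp.notMem_support_iff.mp hx, pow_zero]
    -- divisibility chain
    have hchain : ∀ k : ℕ, ∃ e : Fin n →₀ ℕ,
        σ^[k] P ∣ P * MvPolynomial.monomial e 1 := by
      intro k
      induction k with
      | zero => exact ⟨0, by simpa using dvd_mul_right P _⟩
      | succ k ih =>
        obtain ⟨e, he⟩ := ih
        refine ⟨e₀ + Stmt8Aux.Bf Ω e, ?_⟩
        rw [Function.iterate_succ_apply']
        have h1 : σ (σ^[k] P) ∣ σ (P * MvPolynomial.monomial e 1) :=
          map_dvd (MvPolynomial.aeval g) he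
        have h2 : σ (P * MvPolynomial.monomial e 1)
            = σ P * MvPolynomial.monomial (Stmt8Aux.Bf Ω e) 1 := by
          simp only [hσ, hg]
          rw [_root_.map_mul, Stmt8Aux.sigma_monomial]
        have h3 : σ P ∣ P * MvPolynomial.monomial e₀ 1 := by
          rw [← hprodI]
          exact hdvd
        calc σ (σ^[k] P) ∣ σ P * MvPolynomial.monomial (Stmt8Aux.Bf Ω e) 1 := by
              rw [← h2]; exact h1
          _ ∣ (P * MvPolynomial.monomial e₀ 1) * MvPolynomial.monomial (Stmt8Aux.Bf Ω e) 1 :=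
              mul_dvd_mul_right h3 _
          _ = P * MvPolynomial.monomial (e₀ + Stmt8Aux.Bf Ω e) 1 := by
              rw [mul_assoc, MvPolynomial.monomial_mul, one_mul]
    -- the difference vector
    set v : Fin n → ℤ := fun i => (a i : ℤ) - (b i : ℤ) with hv
    have hvne : v ≠ 0 := by
      intro h0
      apply hab
      ext i
      have := congrFun h0 i
      simp only [hv, Pi.zero_apply, sub_eq_zero] at this
      exact_mod_cast this
    have hunivne : (Finset.univ : Finset (Fin n)).Nonempty := by
      obtain ⟨i, -⟩ := Function.ne_iff.mp hvne
      exact ⟨i, Finset.mem_univ i⟩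
    set Bd : ℤ := Finset.univ.sup' hunivne
      (fun j => Stmt8Aux.width (Pi.single j 1) P hPne) with hBd
    obtain ⟨k, j, hkj⟩ := Stmt8Aux.dyn Ω hdet hroot v hvne Bd
    set u : Fin n → ℤ := Pi.single j 1 with hu
    -- the iterate is nonzero with known support elements
    have hamem : (Stmt8Aux.Bf Ω)^[k] a ∈ (σ^[k] P).support := by
      rw [MvPolynomial.mem_support_iff, hcoeffit k P a]
      exact MvPolynomial.mem_support_iff.mp ha
    have hbmem : (Stmt8Aux.Bf Ω)^[k] b ∈ (σ^[k] P).support := by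
      rw [MvPolynomial.mem_support_iff, hcoeffit k P b]
      exact MvPolynomial.mem_support_iff.mp hb
    have hσkne : (σ^[k] P).support.Nonempty := ⟨_, hamem⟩
    -- upper bound on the width of the iterate
    obtain ⟨e, he⟩ := hchain k
    have hmono : (MvPolynomial.monomial e 1 : MvPolynomial (Fin n) C) ≠ 0 := by
      intro h0
      have := MvPolynomial.coeff_monomial e e (1 : C) ▸ congrArg (MvPolynomial.coeff e) h0
      simp at this
    have hPm : (P * MvPolynomial.monomial e 1).support.Nonempty :=
      MvPolynomial.support_nonempty.mpr (mul_ne_zero hP hmono)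
    have hmne : (MvPolynomial.monomial e 1 : MvPolynomial (Fin n) C).support.Nonempty :=
      MvPolynomial.support_nonempty.mpr hmono
    have hw1 : Stmt8Aux.width u (σ^[k] P) hσkne ≤ Stmt8Aux.width u (P * MvPolynomial.monomial e 1) hPm :=
      Stmt8Aux.width_dvd_le u _ _ he hσkne hPm
    have hw2 : Stmt8Aux.width u (P * MvPolynomial.monomial e 1) hPm
        = Stmt8Aux.width u P hPne := by
      rw [Stmt8Aux.width_mul u P (MvPolynomial.monomial e 1) hPne hmne hPm,
        Stmt8Aux.width_monomial u e one_ne_zero hmne, add_zero]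
    have hw3 : Stmt8Aux.width u P hPne ≤ Bd := by
      rw [hBd, hu]
      exact Finset.le_sup' (fun j => Stmt8Aux.width (Pi.single j 1) P hPne) (Finset.mem_univ j)
    -- lower bound via support elements
    have hcast : ∀ (k : ℕ) (c : Fin n →₀ ℕ),
        (fun j => ((((Stmt8Aux.Bf Ω)^[k] c) j : ℕ) : ℤ))
          = (fun i => ((c i : ℕ) : ℤ)) ᵥ* (Ω.map (Nat.cast : ℕ → ℤ)) ^ k := by
      intro k
      induction k with
      | zero => intro c; simp [Matrix.vecMul_one]
      | succ k ih =>
        intro c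
        rw [Function.iterate_succ_apply', pow_succ, ← Matrix.vecMul_vecMul, ← ih c]
        funext j'
        simp only [Stmt8Aux.Bf_apply]
        push_cast
        simp [Matrix.vecMul, dotProduct, Matrix.map_apply]
    have hdiff : (v ᵥ* (Ω.map (Nat.cast : ℕ → ℤ)) ^ k) j
        = Stmt8Aux.w u ((Stmt8Aux.Bf Ω)^[k] a) - Stmt8Aux.w u ((Stmt8Aux.Bf Ω)^[k] b) := by
      rw [hu, Stmt8Aux.w_single, Stmt8Aux.w_single]
      have hvv : v = (fun i => ((a i : ℕ) : ℤ)) - (fun i => ((b i : ℕ) : ℤ)) := by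
        funext i; simp [hv]
      rw [hvv, Matrix.sub_vecMul]
      have h1 := congrFun (hcast k a) j
      have h2 := congrFun (hcast k b) j
      simp only [Pi.sub_apply]
      rw [← h1, ← h2]
    have habs : |(v ᵥ* (Ω.map (Nat.cast : ℕ → ℤ)) ^ k) j|
        ≤ Stmt8Aux.width u (σ^[k] P) hσkne := by
      rw [abs_le]
      constructor
      · have := Stmt8Aux.sub_le_width (u := u) hσkne hbmem hamem
        rw [hdiff]; linarith
      · have := Stmt8Aux.sub_le_width (u := u) hσkne hamem hbmem
        rw [hdiff]; linarith
    linarith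
end

section
/- Let {R_k} be a linear recurrence of nonnegative integers with R_{k+n} = c₁R_{k+n-1} + ⋯ + c_nR_k, where R₀,…,R_{n-1} are not all zero, the c_i are nonnegative integers with c_n ≠ 0, {R_k} is not a geometric progression, and the ratio of any two distinct roots of Φ(X) = Xⁿ - c₁X^{n-1} - ⋯ - c_n is not a root of unity. Then there do not exist a positive integer l and a nonzero rational number c with R_{k+l} = c·R_k for all k ≥ 0. -/
set_option synthInstance.maxHeartbeats 400000

/-- The characteristic polynomial Φ(X) = Xⁿ - c₁X^{n-1} - ⋯ - c_n (over ℂ) of the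
recurrence R_{k+n} = c₁R_{k+n-1} + ⋯ + c_nR_k, where `c i` stands for c_{i+1}. -/
noncomputable def recCharPoly (n : ℕ) (c : Fin n → ℕ) : Polynomial ℂ :=
  Polynomial.X ^ n - ∑ i : Fin n, Polynomial.C ((c i : ℂ)) * Polynomial.X ^ (n - 1 - (i : ℕ))

open Polynomial

/-- shift operator on complex sequences -/
def seqShift : Module.End ℂ (ℕ → ℂ) where
  toFun f := fun k => f (k + 1)
  map_add' f g := rfl
  map_smul' a f := rfl

lemma seqShift_pow (m : ℕ) (f : ℕ → ℂ) (k : ℕ) : ((seqShift ^ m) f) k = f (k + m) := by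
  induction m generalizing f k with
  | zero => simp
  | succ m ih =>
    rw [pow_succ, Module.End.mul_apply, ih]
    rfl

/-- Let {R_k} be a linear recurrence of nonnegative integers with
R_{k+n} = c₁R_{k+n-1} + ⋯ + c_nR_k, where R₀,…,R_{n-1} are not all zero, the c_i are
nonnegative integers with c_n ≠ 0, {R_k} is not a geometric progression, and the ratio
of any two distinct roots of Φ(X) is not a root of unity. Then there do not exist a
positive integer l and a nonzero rational number c with R_{k+l} = c·R_k for all k ≥ 0. -/
theorem stmt_9 (n : ℕ) (hn : 0 < n) (c : Fin n → ℕ) (R : ℕ → ℕ)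
    (hrec : ∀ k : ℕ, R (k + n) = ∑ i : Fin n, c i * R (k + n - 1 - (i : ℕ)))
    (hcn : c ⟨n - 1, by omega⟩ ≠ 0)
    (hinit : ∃ i : Fin n, R i ≠ 0)
    (hgeom : ¬ ∃ q : ℚ, ∀ k : ℕ, (R (k + 1) : ℚ) = q * R k)
    (hratio : ∀ x y : ℂ, (recCharPoly n c).IsRoot x → (recCharPoly n c).IsRoot y →
      x ≠ y → ∀ k : ℕ, 0 < k → (x / y) ^ k ≠ 1) :
    ¬ ∃ (l : ℕ) (q : ℚ), 0 < l ∧ q ≠ 0 ∧ ∀ k : ℕ, (R (k + l) : ℚ) = q * R k := by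
  rintro ⟨l, q, hl, hq0, hq⟩
  set Rc : ℕ → ℂ := fun k => (R k : ℂ) with hRcdef
  -- the annihilator ideal of the sequence
  let I : Ideal (Polynomial ℂ) :=
    { carrier := {p | (Polynomial.aeval seqShift p) Rc = 0}
      add_mem' := by
        intro a b ha hb
        simp only [Set.mem_setOf_eq, map_add, LinearMap.add_apply] at *
        rw [ha, hb, add_zero]
      zero_mem' := by simp
      smul_mem' := by
        intro p a ha
        simp only [Set.mem_setOf_eq, smul_eq_mul, map_mul, Module.End.mul_apply] at *
        rw [ha, map_zero] }
  have memI : ∀ p, p ∈ I ↔ (Polynomial.aeval seqShift p) Rc = 0 := fun p => Iff.rfl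
  -- Φ annihilates
  have hΦ : recCharPoly n c ∈ I := by
    rw [memI]
    unfold recCharPoly
    rw [map_sub, map_pow, Polynomial.aeval_X, map_sum]
    funext k
    simp only [LinearMap.sub_apply, LinearMap.sum_apply, Pi.sub_apply, Pi.zero_apply,
      Finset.sum_apply, map_mul, Polynomial.aeval_C, map_pow, Polynomial.aeval_X,
      Module.End.mul_apply, Module.algebraMap_end_apply, Pi.smul_apply, smul_eq_mul]
    rw [seqShift_pow]
    have h1 : ∀ i : Fin n, ((seqShift ^ (n - 1 - (i : ℕ))) Rc) k = Rc (k + n - 1 - (i : ℕ)) := by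
      intro i
      rw [seqShift_pow]
      congr 1
      omega
    rw [Finset.sum_congr rfl (fun i _ => by rw [h1 i])]
    have := hrec k
    have hc : (R (k + n) : ℂ) = ∑ i : Fin n, (c i : ℂ) * (R (k + n - 1 - (i : ℕ)) : ℂ) := by
      rw [this]; push_cast; ring
    simp only [hRcdef]
    rw [hc, sub_self]
  -- X^l - C q annihilates
  have hP : (Polynomial.X ^ l - Polynomial.C (q : ℂ)) ∈ I := by
    rw [memI]
    rw [map_sub, map_pow, Polynomial.aeval_X, Polynomial.aeval_C]
    funext k
    simp only [LinearMap.sub_apply, Pi.sub_apply, Pi.zero_apply,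
      Module.algebraMap_end_apply, Pi.smul_apply, smul_eq_mul]
    rw [seqShift_pow]
    have := hq k
    have hc : (R (k + l) : ℂ) = (q : ℂ) * (R k : ℂ) := by exact_mod_cast this
    simp only [hRcdef]
    rw [hc, sub_self]
  -- generator
  obtain ⟨g, hg⟩ := (IsPrincipalIdealRing.principal I)
  have hgen : ∀ p, p ∈ I ↔ g ∣ p := by
    intro p
    rw [hg, Ideal.submodule_span_eq, Ideal.mem_span_singleton]
  have hPne : (Polynomial.X ^ l - Polynomial.C (q : ℂ)) ≠ 0 :=
    (Polynomial.monic_X_pow_sub_C _ hl.ne').ne_zero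
  have hgP : g ∣ (Polynomial.X ^ l - Polynomial.C (q : ℂ)) := (hgen _).mp hP
  have hgΦ : g ∣ recCharPoly n c := (hgen _).mp hΦ
  have hgne : g ≠ 0 := by
    rintro rfl
    exact hPne (zero_dvd_iff.mp hgP)
  -- Rc is nonzero
  have hRcne : Rc ≠ 0 := by
    obtain ⟨i, hi⟩ := hinit
    intro h
    apply hi
    have := congrFun h (i : ℕ)
    simpa [hRcdef] using this
  have hgnu : ¬ IsUnit g := by
    intro hu
    have h1 : (1 : Polynomial ℂ) ∈ I := (hgen 1).mpr (isUnit_iff_dvd_one.mp hu)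
    rw [memI] at h1
    simp at h1
    exact hRcne h1
  have hdeg : 0 < g.degree := by
    rcases lt_or_eq_of_le (Polynomial.zero_le_degree_iff.mpr hgne) with h | h
    · exact h
    · exfalso
      apply hgnu
      rw [Polynomial.eq_C_of_degree_le_zero h.ge]
      apply Polynomial.isUnit_C.mpr
      apply isUnit_iff_ne_zero.mpr
      intro h0
      apply hgne
      rw [Polynomial.eq_C_of_degree_le_zero h.ge, h0, map_zero]
  -- roots of g
  have hrootP : ∀ x : ℂ, g.IsRoot x → x ^ l = (q : ℂ) := by
    intro x hx
    have : (Polynomial.X ^ l - Polynomial.C (q : ℂ)).IsRoot x := hx.dvd hgP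
    simpa [Polynomial.IsRoot, sub_eq_zero] using this
  have hrootΦ : ∀ x : ℂ, g.IsRoot x → (recCharPoly n c).IsRoot x := fun x hx => hx.dvd hgΦ
  obtain ⟨lam, hlam⟩ := Complex.exists_root hdeg
  have hfac : (Polynomial.X - Polynomial.C lam) ∣ g := Polynomial.dvd_iff_isRoot.mpr hlam
  obtain ⟨h, hh⟩ := hfac
  have hhne : h ≠ 0 := by rintro rfl; simp at hh; exact hgne hh
  -- h is constant
  have hhdeg : h.degree ≤ 0 := by
    by_contra hc'
    push_neg at hc'
    obtain ⟨mu, hmu⟩ := Complex.exists_root hc'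
    have hmug : g.IsRoot mu := by
      rw [hh, Polynomial.IsRoot, Polynomial.eval_mul]
      rw [hmu.eq_zero, mul_zero]
    by_cases hme : mu = lam
    · -- double root: (X - lam)^2 ∣ X^l - C q
      subst hme
      have h2 : (Polynomial.X - Polynomial.C mu) ^ 2 ∣ (Polynomial.X ^ l - Polynomial.C (q : ℂ)) := by
        refine dvd_trans ?_ hgP
        rw [hh, sq]
        exact mul_dvd_mul_left _ (Polynomial.dvd_iff_isRoot.mpr hmu)
      obtain ⟨u, hu⟩ := h2
      have hder : Polynomial.eval mu (Polynomial.derivative (Polynomial.X ^ l - Polynomial.C (q : ℂ))) = 0 := by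
        rw [hu, Polynomial.derivative_mul, Polynomial.eval_add, Polynomial.eval_mul,
          Polynomial.eval_mul, Polynomial.derivative_pow]
        simp [Polynomial.eval_pow, Polynomial.eval_sub]
      rw [Polynomial.derivative_sub, Polynomial.derivative_C, sub_zero,
        Polynomial.derivative_X_pow] at hder
      simp only [Polynomial.eval_mul, Polynomial.eval_natCast, Polynomial.eval_pow,
        Polynomial.eval_C, Polynomial.eval_X] at hder
      have hlne : (l : ℂ) ≠ 0 := Nat.cast_ne_zero.mpr hl.ne'
      have hmu0 : mu = 0 := by
        rcases mul_eq_zero.mp hder with h' | h'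
        · exact absurd h' hlne
        · exact (pow_eq_zero_iff'.mp h').1
      have : (q : ℂ) = 0 := by
        rw [← hrootP mu hmug, hmu0, zero_pow hl.ne']
      exact hq0 (by exact_mod_cast this)
    · -- two distinct roots
      have h1 := hrootP lam hlam
      have h2 := hrootP mu hmug
      have hmune : mu ≠ 0 := by
        intro h0
        apply hq0
        have : (q : ℂ) = 0 := by rw [← h2, h0, zero_pow hl.ne']
        exact_mod_cast this
      refine hratio mu lam (hrootΦ mu hmug) (hrootΦ lam hlam) hme l hl ?_
      rw [div_pow, h1, h2, div_self]
      exact fun h0 => hq0 (by exact_mod_cast h0)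
  -- so g = (X - C lam) * C a , and X - C lam ∈ I
  obtain ⟨a, ha⟩ : ∃ a : ℂ, h = Polynomial.C a := ⟨h.coeff 0, Polynomial.eq_C_of_degree_le_zero hhdeg⟩
  have hane : a ≠ 0 := fun h0 => hhne (by rw [ha, h0, map_zero])
  have hXlamI : (Polynomial.X - Polynomial.C lam) ∈ I := by
    have hgI : g ∈ I := (hgen g).mpr dvd_rfl
    have : (Polynomial.X - Polynomial.C lam) = Polynomial.C a⁻¹ * g := by
      rw [hh, ha, mul_comm (Polynomial.X - Polynomial.C lam), ← mul_assoc, ← map_mul,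
        inv_mul_cancel₀ hane, map_one, one_mul]
    rw [this]
    exact Ideal.mul_mem_left I _ hgI
  -- the recurrence is first order
  have hstep : ∀ k : ℕ, Rc (k + 1) = lam * Rc k := by
    intro k
    rw [memI] at hXlamI
    have := congrFun hXlamI k
    simp only [map_sub, Polynomial.aeval_X, Polynomial.aeval_C, LinearMap.sub_apply,
      Pi.sub_apply, Pi.zero_apply, Module.algebraMap_end_apply, Pi.smul_apply,
      smul_eq_mul] at this
    have h1 : (seqShift Rc) k = Rc (k + 1) := rfl
    rw [h1] at this
    linear_combination this
  have hR0 : R 0 ≠ 0 := by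
    intro h0
    have hall : ∀ k, Rc k = 0 := by
      intro k
      induction k with
      | zero => simp [hRcdef, h0]
      | succ k ih => rw [hstep, ih, mul_zero]
    obtain ⟨i, hi⟩ := hinit
    have := hall i
    simp only [hRcdef] at this
    exact hi (by exact_mod_cast this)
  apply hgeom
  refine ⟨(R 1 : ℚ) / (R 0 : ℚ), fun k => ?_⟩
  have hR0c : (R 0 : ℂ) ≠ 0 := Nat.cast_ne_zero.mpr hR0
  have hlamval : lam = (R 1 : ℂ) / (R 0 : ℂ) := by
    have h0 := hstep 0
    simp only [hRcdef, zero_add] at h0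
    exact (eq_div_iff hR0c).mpr h0.symm
  have : ((R (k + 1) : ℚ) : ℂ) = (((R 1 : ℚ) / (R 0 : ℚ) * (R k : ℚ) : ℚ) : ℂ) := by
    push_cast
    rw [← hlamval]
    exact hstep k
  exact_mod_cast this
end

section
/- Let g₁(y) = ∏_{k=0}^∞(1-a_k y) and g₂(y) = ∏_{k=k₀}^∞(1-a_k y) for a summable complex sequence {a_k}, a point β ∈ ℂ with 1-a_kβ ≠ 0 for all k ≥ k₀, and let n := ord_{y=β} g₁. Then for each M ≥ 0 there is an invertible lower triangular (M+1)×(M+1) matrix L over ℂ (with nonzero diagonal entries) such that the column vector (g₁^{(n)}(β), g₁^{(n+1)}(β), …, g₁^{(n+M)}(β))ᵀ equals L times (g₂(β), g₂'(β), …, g₂^{(M)}(β))ᵀ; explicitly the diagonal entries are binom(m+n, m)·p·q for 0 ≤ m ≤ M where p = P^{(n)} with P(y)=(1-β^{-1}y)^n (P=1 and p=1 if n=0) and q = ∏_{k<k₀, a_k ≠ β^{-1}} (1-a_kβ) ≠ 0. -/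
open Polynomial in
lemma aux_polyID (j : ℕ) (p : Polynomial ℂ) :
    iteratedDeriv j (fun x : ℂ => p.eval x) = fun x => (derivative^[j] p).eval x := by
  induction j generalizing p with
  | zero => simp
  | succ j ih =>
    rw [iteratedDeriv_succ', Function.iterate_succ_apply]
    have : (deriv fun x : ℂ => p.eval x) = fun x => (derivative p).eval x :=
      funext fun x => Polynomial.deriv (p := p)
    rw [this, ih]

open Polynomial in
lemma aux_P_deriv (β : ℂ) (hβ0 : β ≠ 0) (n j : ℕ) :
    iteratedDeriv j (fun y : ℂ => (1 - β⁻¹ * y) ^ n) =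
      fun x => (-β⁻¹) ^ n * ((n.descFactorial j : ℂ) * (x - β) ^ (n - j)) := by
  have h1 : (fun y : ℂ => (1 - β⁻¹ * y) ^ n)
      = fun y : ℂ => (Polynomial.C ((-β⁻¹)^n) * (X - Polynomial.C β) ^ n).eval y := by
    funext y
    have : (1 - β⁻¹ * y) = -β⁻¹ * (y - β) := by field_simp; ring
    rw [this, eval_mul, eval_C, eval_pow, eval_sub, eval_X, eval_C, mul_pow]
  rw [h1, aux_polyID]
  funext x
  rw [iterate_derivative_C_mul, iterate_derivative_X_sub_pow]
  simp [mul_comm]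


lemma aux_binom_rec (u v : ℕ → ℂ) (N : ℕ) :
    ∑ j ∈ Finset.range (N+1), (N.choose j : ℂ) * u (j+1) * v (N - j)
      + ∑ j ∈ Finset.range (N+2), (N.choose j : ℂ) * u j * v (N+1-j)
    = ∑ j ∈ Finset.range (N+2), ((N+1).choose j : ℂ) * u j * v (N+1-j) := by
  rw [Finset.sum_range_succ' (fun j => ((N+1).choose j : ℂ) * u j * v (N+1-j)) (N+1),
    Finset.sum_range_succ' (fun j => ((N).choose j : ℂ) * u j * v (N+1-j)) (N+1)]
  simp only [Nat.succ_sub_succ_eq_sub, Nat.choose_succ_succ' N, Nat.choose_zero_right,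
    Nat.cast_add, Nat.cast_one, Nat.sub_zero, add_mul]
  rw [Finset.sum_add_distrib]
  ring

lemma aux_an_iter {s : Set ℂ} {f : ℂ → ℂ} (hf : AnalyticOnNhd ℂ f s) (j : ℕ) :
    AnalyticOnNhd ℂ (iteratedDeriv j f) s := by
  rw [iteratedDeriv_eq_iterate]
  exact hf.iterated_deriv j

lemma aux_leibniz {s : Set ℂ} {f g : ℂ → ℂ}
    (hf : AnalyticOnNhd ℂ f s) (hg : AnalyticOnNhd ℂ g s) (hs : IsOpen s) (N : ℕ) :
    ∀ x ∈ s, iteratedDeriv N (fun y => f y * g y) x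
      = ∑ j ∈ Finset.range (N + 1),
          (N.choose j : ℂ) * iteratedDeriv j f x * iteratedDeriv (N - j) g x := by
  induction N with
  | zero => intro x hx; simp
  | succ N ih =>
    intro x hx
    have heq : iteratedDeriv N (fun y => f y * g y) =ᶠ[nhds x]
        fun y => ∑ j ∈ Finset.range (N + 1),
          (N.choose j : ℂ) * iteratedDeriv j f y * iteratedDeriv (N - j) g y :=
      Filter.eventually_of_mem (hs.mem_nhds hx) (fun y hy => ih y hy)
    have hdf : ∀ j : ℕ, DifferentiableAt ℂ (iteratedDeriv j f) x :=
      fun j => ((aux_an_iter hf j) x hx).differentiableAt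
    have hdg : ∀ j : ℕ, DifferentiableAt ℂ (iteratedDeriv j g) x :=
      fun j => ((aux_an_iter hg j) x hx).differentiableAt
    have hterm : ∀ j ∈ Finset.range (N + 1), DifferentiableAt ℂ
        (fun y => (N.choose j : ℂ) * iteratedDeriv j f y * iteratedDeriv (N - j) g y) x :=
      fun j _ => (((differentiableAt_const _).mul (hdf j)).mul (hdg (N - j)))
    have hder : ∀ j ∈ Finset.range (N + 1),
        deriv (fun y => (N.choose j : ℂ) * iteratedDeriv j f y * iteratedDeriv (N - j) g y) x
        = (N.choose j : ℂ) * iteratedDeriv (j+1) f x * iteratedDeriv (N - j) g x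
          + (N.choose j : ℂ) * iteratedDeriv j f x * iteratedDeriv (N - j + 1) g x := by
      intro j _
      rw [deriv_fun_mul ((differentiableAt_const _).fun_mul (hdf j)) (hdg (N - j)),
        deriv_const_mul _ (hdf j), ← iteratedDeriv_succ, ← iteratedDeriv_succ]
    rw [iteratedDeriv_succ, heq.deriv_eq, deriv_fun_sum hterm,
      Finset.sum_congr rfl hder, Finset.sum_add_distrib]
    have e2 : ∑ j ∈ Finset.range (N+1),
        (N.choose j : ℂ) * iteratedDeriv j f x * iteratedDeriv (N - j + 1) g x
        = ∑ j ∈ Finset.range (N+2),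
        (N.choose j : ℂ) * iteratedDeriv j f x * iteratedDeriv (N + 1 - j) g x := by
      rw [Finset.sum_range_succ (n := N + 1)]
      simp only [Nat.choose_succ_self, Nat.cast_zero, zero_mul, add_zero]
      refine Finset.sum_congr rfl fun j hj => ?_
      rw [Finset.mem_range] at hj
      have : N - j + 1 = N + 1 - j := by omega
      rw [this]
    rw [e2, aux_binom_rec (fun j => iteratedDeriv j f x) (fun j => iteratedDeriv j g x) N]


lemma aux_entire (c : ℕ → ℂ) (s : Finset ℕ) :
    AnalyticOnNhd ℂ (fun y : ℂ => ∏ k ∈ s, (1 - c k * y)) Set.univ :=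
  ((Differentiable.fun_finsetProd (u := s) (f := fun k y => 1 - c k * y)
    (fun i _ => by fun_prop)).differentiableOn).analyticOnNhd isOpen_univ

lemma aux_entire_pow (c : ℂ) (n : ℕ) :
    AnalyticOnNhd ℂ (fun y : ℂ => (1 - c * y) ^ n) Set.univ :=
  ((Differentiable.differentiableOn (by fun_prop))).analyticOnNhd isOpen_univ
section
open Complex Filter




lemma aux_tail (b : ℕ → ℂ) (hsum : Summable fun k => ‖b k‖) (β : ℂ)
    (hβ : ∀ k, 1 - b k * β ≠ 0) :
    ∃ B : Set ℂ, IsOpen B ∧ β ∈ B ∧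
      (∀ y ∈ B, ∀ k, 1 - b k * y ≠ 0) ∧
      (∀ y ∈ B, Multipliable fun k => 1 - b k * y) ∧
      AnalyticOnNhd ℂ (fun y => ∏' k, (1 - b k * y)) B ∧
      (∏' k, (1 - b k * β)) ≠ 0 := by
  -- choose K
  have htend : Tendsto (fun k => ‖b k‖) atTop (nhds 0) := hsum.tendsto_atTop_zero
  have hc : (0:ℝ) < (1/2) / (‖β‖ + 1) := by positivity
  obtain ⟨K, hK⟩ := (Filter.eventually_atTop).mp (htend.eventually_lt_const hc)
  have hKb : ∀ k, K ≤ k → ‖b k‖ * (‖β‖ + 1) ≤ 1/2 := by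
    intro k hk
    have h1 := (hK k hk).le
    have h2 : (0:ℝ) < ‖β‖ + 1 := by positivity
    calc ‖b k‖ * (‖β‖ + 1)
        ≤ ((1/2) / (‖β‖ + 1)) * (‖β‖ + 1) := by
          exact mul_le_mul_of_nonneg_right h1 h2.le
      _ = 1/2 := by field_simp
  -- choose the ball
  have hUo : IsOpen {y : ℂ | ∀ k < K, 1 - b k * y ≠ 0} := by
    have : {y : ℂ | ∀ k < K, 1 - b k * y ≠ 0}
        = ⋂ k ∈ Finset.range K, {y : ℂ | 1 - b k * y ≠ 0} := by
      ext y; simp [Finset.mem_range]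
    rw [this]
    exact isOpen_biInter_finset fun k _ =>
      (isOpen_ne_fun (by fun_prop) (by fun_prop))
  have hUβ : β ∈ {y : ℂ | ∀ k < K, 1 - b k * y ≠ 0} := fun k _ => hβ k
  obtain ⟨ε, hε, hball⟩ := Metric.isOpen_iff.mp hUo β hUβ
  set r : ℝ := min ε 1 with hr
  have hr0 : 0 < r := lt_min hε one_pos
  set B : Set ℂ := Metric.ball β r with hB
  have hβB : β ∈ B := Metric.mem_ball_self hr0
  have hBo : IsOpen B := Metric.isOpen_ball
  have hynorm : ∀ y ∈ B, ‖y‖ ≤ ‖β‖ + 1 := by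
    intro y hy
    have : dist y β < 1 := lt_of_lt_of_le hy (min_le_right _ _)
    calc ‖y‖ = ‖β + (y - β)‖ := by ring_nf
      _ ≤ ‖β‖ + ‖y - β‖ := norm_add_le _ _
      _ ≤ ‖β‖ + 1 := by
          have h3 : ‖y - β‖ < 1 := by
            rw [← dist_eq_norm]; exact this
          linarith
  have htail_small : ∀ y ∈ B, ∀ k, K ≤ k → ‖b k * y‖ ≤ 1/2 := by
    intro y hy k hk
    rw [norm_mul]
    calc ‖b k‖ * ‖y‖
        ≤ ‖b k‖ * (‖β‖ + 1) :=
          mul_le_mul_of_nonneg_left (hynorm y hy) (norm_nonneg _)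
      _ ≤ 1/2 := hKb k hk
  have hne : ∀ y ∈ B, ∀ k, 1 - b k * y ≠ 0 := by
    intro y hy k
    rcases lt_or_ge k K with h | h
    · have : y ∈ Metric.ball β ε :=
        Metric.ball_subset_ball (min_le_left _ _) hy
      exact hball this k h
    · intro hzero
      have : b k * y = 1 := by linear_combination -hzero
      have h1 : ‖b k * y‖ = 1 := by rw [this]; simp
      have := htail_small y hy k h
      rw [h1] at this; linarith
  -- summability of logs
  have hsumK : Summable (fun k => ‖b (k + K)‖) := (summable_nat_add_iff K).mpr hsum
  have hlog_tail : ∀ y ∈ B, Summable fun k => Complex.log (1 - b (k+K) * y) := by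
    intro y hy
    apply Summable.of_norm_bounded
      (g := fun k => 3/2 * (‖b (k+K)‖ * (‖β‖ + 1)))
      ((hsumK.mul_right (‖β‖ + 1)).mul_left (3/2))
    intro k
    have h1 : ‖-(b (k+K) * y)‖ ≤ 1/2 := by
      simpa using htail_small y hy (k+K) (Nat.le_add_left K k)
    have h2 := Complex.norm_log_one_add_half_le_self h1
    rw [show (1 : ℂ) + -(b (k+K) * y) = 1 - b (k+K) * y by ring] at h2
    refine h2.trans ?_
    have h3 : ‖-(b (k+K) * y)‖ ≤ ‖b (k+K)‖ * (‖β‖ + 1) := by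
      rw [norm_neg, norm_mul]
      exact mul_le_mul_of_nonneg_left (hynorm y hy) (norm_nonneg _)
    nlinarith [norm_nonneg (b (k+K)), norm_nonneg y]
  have hlog_full : ∀ y ∈ B, Summable fun k => Complex.log (1 - b k * y) :=
    fun y hy => (summable_nat_add_iff K).mp (hlog_tail y hy)
  have hmul : ∀ y ∈ B, Multipliable fun k => 1 - b k * y := fun y hy =>
    Complex.multipliable_of_summable_log (hlog_full y hy)
  have hmul_tail : ∀ y ∈ B, Multipliable fun k => 1 - b (k+K) * y := fun y hy =>
    Complex.multipliable_of_summable_log (hlog_tail y hy)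
  set Φ : ℂ → ℂ := fun y => ∑' k, Complex.log (1 - b (k+K) * y) with hΦ
  have htail_val : ∀ y ∈ B, (∏' k, (1 - b (k+K) * y)) = Complex.exp (Φ y) := by
    intro y hy
    exact (Complex.cexp_tsum_eq_tprod (f := fun k => 1 - b (k+K) * y)
      (fun k => hne y hy (k+K)) (hlog_tail y hy)).symm
  have hΦdiff : ∀ y ∈ B, HasDerivAt Φ (∑' k, (-(b (k+K)) / (1 - b (k+K) * y))) y := by
    intro y hy
    have hg : ∀ (n : ℕ) (z : ℂ), z ∈ B → HasDerivAt (fun w => Complex.log (1 - b (n+K) * w))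
        (-(b (n+K)) / (1 - b (n+K) * z)) z := by
      intro n z hz
      have h0 : HasDerivAt (fun w : ℂ => 1 - b (n+K) * w) (-(b (n+K))) z := by
        simpa using ((hasDerivAt_id z).const_mul (b (n+K))).const_sub 1
      apply h0.clog
      rw [Complex.mem_slitPlane_iff]
      left
      have h4 : ‖b (n+K) * z‖ ≤ 1/2 := htail_small z hz (n+K) (Nat.le_add_left K n)
      have h5 : (b (n+K) * z).re ≤ 1/2 :=
        le_trans (Complex.re_le_norm _) h4
      simp only [Complex.sub_re, Complex.one_re, Complex.mul_re]
      have : (b (n+K) * z).re = (b (n+K)).re * z.re - (b (n+K)).im * z.im := Complex.mul_re _ _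
      linarith [this ▸ h5]
    have hg' : ∀ (n : ℕ) (z : ℂ), z ∈ B →
        ‖-(b (n+K)) / (1 - b (n+K) * z)‖ ≤ 2 * ‖b (n+K)‖ := by
      intro n z hz
      have h4 : ‖b (n+K) * z‖ ≤ 1/2 := htail_small z hz (n+K) (Nat.le_add_left K n)
      have hden : 1/2 ≤ ‖1 - b (n+K) * z‖ := by
        have := norm_sub_norm_le (1 : ℂ) (b (n+K) * z)
        simp only [norm_one] at this
        linarith
      rw [norm_div, norm_neg]
      rw [div_le_iff₀ (by linarith : (0:ℝ) < ‖1 - b (n+K) * z‖)]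
      nlinarith [norm_nonneg (b (n+K))]
    exact hasDerivAt_tsum_of_isPreconnected
      (u := fun k => 2 * ‖b (k+K)‖)
      (g := fun n z => Complex.log (1 - b (n+K) * z))
      (g' := fun n z => -(b (n+K)) / (1 - b (n+K) * z))
      (hsumK.mul_left 2) hBo ((convex_ball β r).isPreconnected)
      hg (fun n z hz => hg' n z hz) hβB (hlog_tail β hβB) hy
  have hΦdiffOn : DifferentiableOn ℂ Φ B :=
    fun y hy => ((hΦdiff y hy).differentiableAt).differentiableWithinAt
  have hG2eq : Set.EqOn (fun y => ∏' k, (1 - b k * y))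
      (fun y => (∏ i ∈ Finset.range K, (1 - b i * y)) * Complex.exp (Φ y)) B := by
    intro y hy
    have h2 := (hmul_tail y hy).hasProd
    rw [htail_val y hy] at h2
    exact (HasProd.prod_range_mul (f := fun k => 1 - b k * y) (k := K) h2).tprod_eq
  have hdiffOn : DifferentiableOn ℂ (fun y => ∏' k, (1 - b k * y)) B := by
    apply DifferentiableOn.congr ?_ hG2eq
    apply DifferentiableOn.mul
    · exact (Differentiable.fun_finsetProd (u := Finset.range K)
        (f := fun i y => 1 - b i * y) (fun i _ => by fun_prop)).differentiableOn
    · exact hΦdiffOn.cexp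
  refine ⟨B, hBo, hβB, hne, hmul, hdiffOn.analyticOnNhd hBo, ?_⟩
  rw [show (∏' (k : ℕ), (1 - b k * β)) = (fun y => ∏' (k : ℕ), (1 - b k * y)) β from rfl,
    hG2eq hβB]
  exact mul_ne_zero (Finset.prod_ne_zero_iff.mpr fun i _ => hne β hβB i)
    (Complex.exp_ne_zero _)

end

set_option synthInstance.maxHeartbeats 400000
set_option maxHeartbeats 1000000

/-- Let g₁(y) = ∏_{k≥0}(1-a_k y) and g₂(y) = ∏_{k≥k₀}(1-a_k y) for a
summable complex sequence {a_k}, a point β ∈ ℂ with 1-a_kβ ≠ 0 for all k ≥ k₀, and let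
n := ord_{y=β} g₁. Then for each M ≥ 0 there is an invertible lower triangular
(M+1)×(M+1) matrix L over ℂ (with nonzero diagonal entries) such that
(g₁^{(n)}(β), …, g₁^{(n+M)}(β))ᵀ = L (g₂(β), g₂'(β), …, g₂^{(M)}(β))ᵀ; explicitly the
diagonal entries are binom(m+n, m)·p·q for 0 ≤ m ≤ M, where p = P^{(n)} with
P(y) = (1-β⁻¹y)^n (so P = 1, p = 1 if n = 0) and
q = ∏_{k<k₀, a_k ≠ β⁻¹} (1 - a_k β) ≠ 0. -/
theorem stmt_15 (a : ℕ → ℂ) (hsum : Summable fun k => ‖a k‖)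
    (k₀ : ℕ) (β : ℂ) (hβ : ∀ k : ℕ, k₀ ≤ k → 1 - a k * β ≠ 0) (n : ℕ)
    (hord : ∃ hg : AnalyticAt ℂ (fun y : ℂ => ∏' k : ℕ, (1 - a k * y)) β,
      analyticOrderAt (fun y : ℂ => ∏' k : ℕ, (1 - a k * y)) β = (n : ℕ∞))
    (M : ℕ) :
    ∃ L : Matrix (Fin (M + 1)) (Fin (M + 1)) ℂ,
      (∀ i j : Fin (M + 1), i < j → L i j = 0) ∧
      (∀ m : Fin (M + 1),
        L m m = (Nat.choose ((m : ℕ) + n) (m : ℕ) : ℂ) *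
            iteratedDeriv n (fun y : ℂ => (1 - β⁻¹ * y) ^ n) 0 *
            ∏ k ∈ (Finset.range k₀).filter (fun k => a k ≠ β⁻¹), (1 - a k * β) ∧
          L m m ≠ 0) ∧
      (∀ m : Fin (M + 1),
        iteratedDeriv (n + (m : ℕ)) (fun y : ℂ => ∏' k : ℕ, (1 - a k * y)) β =
          ∑ μ : Fin (M + 1),
            L m μ * iteratedDeriv (μ : ℕ) (fun y : ℂ => ∏' k : ℕ, (1 - a (k + k₀) * y)) β) := by
  classical
  obtain ⟨hg, hord⟩ := hord
  have hsb : Summable fun k => ‖a (k + k₀)‖ := (summable_nat_add_iff k₀).mpr hsum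
  have hβb : ∀ k, 1 - a (k + k₀) * β ≠ 0 := fun k => hβ (k + k₀) (Nat.le_add_left k₀ k)
  obtain ⟨B, hBo, hβB, hne, hmul, hG₂an, hG₂βne⟩ := aux_tail (fun k => a (k + k₀)) hsb β hβb
  set G₂ : ℂ → ℂ := fun y => ∏' k : ℕ, (1 - a (k + k₀) * y) with hG₂def
  set F : ℂ → ℂ := fun y => ∏ k ∈ Finset.range k₀, (1 - a k * y) with hFdef
  have hFan : AnalyticOnNhd ℂ F Set.univ := aux_entire a (Finset.range k₀)
  have hsplit : ∀ y ∈ B, (∏' k : ℕ, (1 - a k * y)) = F y * G₂ y := fun y hy =>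
    (HasProd.prod_range_mul (f := fun k => 1 - a k * y) (k := k₀) (hmul y hy).hasProd).tprod_eq
  -- the filtered sets
  set s₂ : Finset ℕ := (Finset.range k₀).filter (fun k => a k ≠ β⁻¹) with hs₂
  set Q : ℂ → ℂ := fun y => ∏ k ∈ s₂, (1 - a k * y) with hQdef
  have hQan : AnalyticOnNhd ℂ Q Set.univ := aux_entire a s₂
  set n₁ : ℕ := ((Finset.range k₀).filter (fun k => a k = β⁻¹)).card with hn₁
  have hFPQ : ∀ y : ℂ, F y = (1 - β⁻¹ * y) ^ n₁ * Q y := by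
    intro y
    rw [hFdef]
    simp only
    rw [← Finset.prod_filter_mul_prod_filter_not (Finset.range k₀) (fun k => a k = β⁻¹)]
    congr 1
    rw [Finset.prod_congr rfl (fun k hk => by
      rw [(Finset.mem_filter.mp hk).2] :
      ∀ k ∈ (Finset.range k₀).filter (fun k => a k = β⁻¹),
        (1 - a k * y) = (1 - β⁻¹ * y)), Finset.prod_const, hn₁]
  have hQβ : Q β ≠ 0 := by
    rw [hQdef]
    refine Finset.prod_ne_zero_iff.mpr fun k hk => ?_
    rcases eq_or_ne β 0 with h0 | h0
    · rw [h0]; simp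
    · intro hzero
      have hk2 := (Finset.mem_filter.mp hk).2
      apply hk2
      have h1 : a k * β = 1 := by linear_combination -hzero
      exact calc a k = a k * β * β⁻¹ := by field_simp
        _ = β⁻¹ := by rw [h1, one_mul]
  set P : ℂ → ℂ := fun y => (1 - β⁻¹ * y) ^ n with hPdef
  set p : ℂ := iteratedDeriv n P 0 with hpdef
  set q : ℂ := Q β with hqdef
  -- order argument
  have hβ0n : β = 0 → n = 0 := by
    intro h0
    have hval : (fun y : ℂ => ∏' k : ℕ, (1 - a k * y)) β ≠ 0 := by
      simp only
      rw [hsplit β hβB]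
      refine mul_ne_zero ?_ hG₂βne
      rw [hFdef]
      simp only [h0, mul_zero, sub_zero]
      simp
    have h2 : analyticOrderAt (fun y : ℂ => ∏' k : ℕ, (1 - a k * y)) β = ((0 : ℕ) : ℕ∞) := by
      rw [hg.analyticOrderAt_eq_natCast]
      exact ⟨_, hg, hval, by filter_upwards with z; simp⟩
    have := hord.symm.trans h2
    exact_mod_cast this
  have hβnen : β ≠ 0 → n = n₁ := by
    intro h0
    have hgan : AnalyticAt ℂ (fun z => (-β⁻¹) ^ n₁ * (Q z * G₂ z)) β :=
      analyticAt_const.mul ((hQan β (Set.mem_univ β)).mul (hG₂an β hβB))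
    have hgne : (-β⁻¹) ^ n₁ * (Q β * G₂ β) ≠ 0 :=
      mul_ne_zero (pow_ne_zero _ (neg_ne_zero.mpr (inv_ne_zero h0)))
        (mul_ne_zero hQβ hG₂βne)
    have h2 : analyticOrderAt (fun y : ℂ => ∏' k : ℕ, (1 - a k * y)) β = ((n₁ : ℕ) : ℕ∞) := by
      rw [hg.analyticOrderAt_eq_natCast]
      refine ⟨fun z => (-β⁻¹) ^ n₁ * (Q z * G₂ z), hgan, hgne, ?_⟩
      filter_upwards [hBo.mem_nhds hβB] with z hz
      rw [hsplit z hz, hFPQ z, smul_eq_mul]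
      have : (1 - β⁻¹ * z) = -β⁻¹ * (z - β) := by field_simp; ring
      rw [this, mul_pow]
      ring
    have := hord.symm.trans h2
    exact_mod_cast this
  -- derivative facts about F
  have hF0 : ∀ i, i < n → iteratedDeriv i F β = 0 := by
    intro i hi
    have h0 : β ≠ 0 := by
      intro h; rw [hβ0n h] at hi; exact Nat.not_lt_zero i hi
    have hnn₁ := hβnen h0
    have hFfun : F = fun y => P y * Q y := funext fun y => by
      rw [hFPQ y, hPdef, hnn₁]
    have hPan : AnalyticOnNhd ℂ P Set.univ := aux_entire_pow β⁻¹ n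
    rw [hFfun, aux_leibniz hPan hQan isOpen_univ i β (Set.mem_univ β)]
    refine Finset.sum_eq_zero fun j hj => ?_
    rw [Finset.mem_range] at hj
    have hjn : j < n := by omega
    have : iteratedDeriv j P β = 0 := by
      rw [hPdef, aux_P_deriv β h0 n j]
      simp only [sub_self]
      rw [zero_pow (by omega : n - j ≠ 0)]
      ring
    rw [this]
    ring
  have hFn : iteratedDeriv n F β = p * q := by
    rcases eq_or_ne β 0 with h0 | h0
    · have hn0 : n = 0 := hβ0n h0
      subst hn0
      rw [iteratedDeriv_zero, hpdef, iteratedDeriv_zero, hPdef, hqdef]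
      simp only [pow_zero, one_mul]
      rw [hFdef, hQdef, h0]
      simp
    · have hnn₁ := hβnen h0
      have hFfun : F = fun y => P y * Q y := funext fun y => by
        rw [hFPQ y, hPdef, hnn₁]
      have hPan : AnalyticOnNhd ℂ P Set.univ := aux_entire_pow β⁻¹ n
      rw [hFfun, aux_leibniz hPan hQan isOpen_univ n β (Set.mem_univ β)]
      rw [Finset.sum_eq_single n]
      · rw [Nat.choose_self, Nat.sub_self, iteratedDeriv_zero, Nat.cast_one, one_mul]
        congr 1
        rw [hpdef, hPdef, aux_P_deriv β h0 n n]
        simp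
      · intro j hj hjn
        rw [Finset.mem_range] at hj
        have : iteratedDeriv j P β = 0 := by
          rw [hPdef, aux_P_deriv β h0 n j]
          simp only [sub_self]
          rw [zero_pow (by omega : n - j ≠ 0)]
          ring
        rw [this]; ring
      · intro h; exact absurd (Finset.self_mem_range_succ n) h
  have hpne : p ≠ 0 := by
    rcases eq_or_ne β 0 with h0 | h0
    · have hn0 : n = 0 := hβ0n h0
      rw [hpdef, hn0, iteratedDeriv_zero, hPdef]
      simp
    · rw [hpdef, hPdef, aux_P_deriv β h0 n n]
      simp only [Nat.sub_self, pow_zero, mul_one]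
      exact mul_ne_zero (pow_ne_zero _ (neg_ne_zero.mpr (inv_ne_zero h0)))
        (by exact_mod_cast Nat.cast_ne_zero.mpr (Nat.descFactorial_self n ▸ Nat.factorial_ne_zero n))
  set Lnat : ℕ → ℕ → ℂ := fun m j =>
    if j ≤ m then (((n + m).choose j : ℕ) : ℂ) * iteratedDeriv (n + m - j) F β else 0
    with hLnat
  refine ⟨fun m j => Lnat (m : ℕ) (j : ℕ), ?_, ?_, ?_⟩
  · intro i j hij
    simp only [hLnat]
    exact if_neg (not_le.mpr hij)
  · intro m
    have hdiag : Lnat (m : ℕ) (m : ℕ)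
        = ((((m : ℕ) + n).choose (m : ℕ) : ℕ) : ℂ) * (p * q) := by
      simp only [hLnat, if_pos (le_refl (m : ℕ))]
      rw [show n + (m : ℕ) - (m : ℕ) = n from by omega, hFn, Nat.add_comm n (m : ℕ)]
    constructor
    · show Lnat (m : ℕ) (m : ℕ) = _
      rw [hdiag, hqdef, hQdef]
      simp only
      ring
    · show Lnat (m : ℕ) (m : ℕ) ≠ 0
      rw [hdiag]
      refine mul_ne_zero ?_ (mul_ne_zero hpne (hqdef ▸ hQβ))
      exact_mod_cast Nat.cast_ne_zero.mpr
        (Nat.pos_iff_ne_zero.mp (Nat.choose_pos (Nat.le_add_right (m : ℕ) n)))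
  · intro m
    have hmM : (m : ℕ) ≤ M := Nat.lt_succ_iff.mp m.isLt
    have hev : (fun y : ℂ => ∏' k : ℕ, (1 - a k * y)) =ᶠ[nhds β]
        fun y => G₂ y * F y := by
      filter_upwards [hBo.mem_nhds hβB] with z hz
      rw [hsplit z hz]; ring
    rw [hev.iteratedDeriv_eq (n + (m : ℕ)),
      aux_leibniz hG₂an (hFan.mono (Set.subset_univ B)) hBo (n + (m : ℕ)) β hβB,
      Fin.sum_univ_eq_sum_range (fun j => Lnat (m : ℕ) j * iteratedDeriv j G₂ β) (M + 1)]
    have hR : ∑ j ∈ Finset.range (n + (m : ℕ) + 1),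
          ((n + (m : ℕ)).choose j : ℂ) * iteratedDeriv j G₂ β
            * iteratedDeriv (n + (m : ℕ) - j) F β
        = ∑ j ∈ Finset.range ((m : ℕ) + 1),
          ((n + (m : ℕ)).choose j : ℂ) * iteratedDeriv j G₂ β
            * iteratedDeriv (n + (m : ℕ) - j) F β := by
      symm
      apply Finset.sum_subset (Finset.range_subset_range.mpr (by omega))
      intro j hj hjm
      rw [Finset.mem_range] at hj hjm
      have : iteratedDeriv (n + (m : ℕ) - j) F β = 0 := hF0 _ (by omega)
      rw [this]; ring
    have hL : ∑ j ∈ Finset.range (M + 1), Lnat (m : ℕ) j * iteratedDeriv j G₂ β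
        = ∑ j ∈ Finset.range ((m : ℕ) + 1), Lnat (m : ℕ) j * iteratedDeriv j G₂ β := by
      symm
      apply Finset.sum_subset (Finset.range_subset_range.mpr (by omega))
      intro j hj hjm
      rw [Finset.mem_range] at hj hjm
      simp only [hLnat]
      rw [if_neg (by omega)]
      ring
    rw [hR, hL]
    refine Finset.sum_congr rfl fun j hj => ?_
    rw [Finset.mem_range] at hj
    simp only [hLnat]
    rw [if_pos (by omega : j ≤ (m : ℕ))]
    ring
end

section
/- Let P ∈ C[X₁,…,X_s] over a field C of characteristic 0, let γ ∈ C^×, τ ∈ {1,…,s}, and suppose X_τ - γ does not divide P. Write P = (X_τ - γ)F + G with G ∈ C[X₁,…,X_{τ-1},X_{τ+1},…,X_s] \ {0}. If C is infinite and M(z) = z₁^{R_{n-1}}⋯z_n^{R₀} is a nonconstant monomial (R₀,…,R_{n-1} nonnegative integers not all zero), then M(z_τ) - γ does not divide P(M(z₁),…,M(z_s)) in C[z₁,…,z_s] (where each z_i is an n-tuple of variables). -/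
set_option synthInstance.maxHeartbeats 400000

open MvPolynomial

/-- Auxiliary: `X τ - C a` divides `p - p[X τ := a]`. -/
private lemma aux_dvd {R : Type*} [CommRing R] {σ : Type*} [DecidableEq σ]
    (τ : σ) (a : R) (p : MvPolynomial σ R) :
    (X τ - MvPolynomial.C a : MvPolynomial σ R) ∣
      p - aeval (Function.update X τ (MvPolynomial.C a)) p := by
  induction p using MvPolynomial.induction_on with
  | C r => simp
  | add p q hp hq =>
      rw [map_add]
      have := dvd_add hp hq
      rwa [sub_add_sub_comm] at this
  | mul_X p i hp =>
      rw [map_mul, aeval_X]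
      by_cases hi : i = τ
      · rw [hi, Function.update_self]
        have h1 : p * X τ
              - aeval (Function.update X τ (MvPolynomial.C a)) p * MvPolynomial.C a
            = (p - aeval (Function.update X τ (MvPolynomial.C a)) p) * X τ
              + aeval (Function.update X τ (MvPolynomial.C a)) p
                * (X τ - MvPolynomial.C a) := by ring
        rw [h1]
        exact dvd_add (hp.mul_right _) (dvd_mul_left _ _)
      · rw [Function.update_of_ne hi]
        have h1 : p * X i - aeval (Function.update X τ (MvPolynomial.C a)) p * X i
            = (p - aeval (Function.update X τ (MvPolynomial.C a)) p) * X i := by ring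
        rw [h1]
        exact hp.mul_right _

/-- Let P ∈ C[X₁,…,X_s] over a field C of characteristic 0 (hence
infinite), let γ ∈ C^×, τ ∈ {1,…,s}, and suppose X_τ - γ does not divide P. If
M(z) = z₁^{R_{n-1}}⋯z_n^{R₀} is a nonconstant monomial (exponents e j = R_{n-1-j}
nonnegative integers, not all zero), then M(z_τ) - γ does not divide
P(M(z₁),…,M(z_s)) in C[z₁,…,z_s] (each z_i an n-tuple of variables). -/
theorem stmt_19 (C : Type*) [Field C] [CharZero C] (s n : ℕ) (hs : 0 < s)
    (e : Fin n → ℕ) (he : ∃ j : Fin n, e j ≠ 0)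
    (P : MvPolynomial (Fin s) C) (τ : Fin s) (γ : C) (hγ : γ ≠ 0)
    (hndvd : ¬ (MvPolynomial.X τ - MvPolynomial.C γ ∣ P)) :
    ¬ ((∏ j : Fin n, (MvPolynomial.X (τ, j) : MvPolynomial (Fin s × Fin n) C) ^ e j) -
          MvPolynomial.C γ ∣
        MvPolynomial.aeval
          (fun i : Fin s =>
            ∏ j : Fin n, (MvPolynomial.X (i, j) : MvPolynomial (Fin s × Fin n) C) ^ e j)
          P) := by
  classical
  intro h
  obtain ⟨j₀, hj₀⟩ := he
  set K := AlgebraicClosure C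
  have hfinj : Function.Injective (algebraMap C K) := (algebraMap C K).injective
  haveI : CharZero K := charZero_of_injective_algebraMap hfinj
  -- Step 1: the remainder G is nonzero
  set GC : MvPolynomial (Fin s) C :=
    aeval (Function.update X τ (MvPolynomial.C γ)) P with hGCdef
  have hG : GC ≠ 0 := by
    intro h0
    apply hndvd
    have hd := aux_dvd τ γ P
    rw [← hGCdef, h0, sub_zero] at hd
    exact hd
  -- Step 2: a nonvanishing point over K
  have hGK : (MvPolynomial.map (algebraMap C K) GC : MvPolynomial (Fin s) K) ≠ 0 := by
    intro h0
    exact hG (MvPolynomial.map_injective _ hfinj (by simpa using h0))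
  have hex : ∃ a : Fin s → K, eval a (MvPolynomial.map (algebraMap C K) GC) ≠ 0 := by
    by_contra hc
    push_neg at hc
    exact hGK (MvPolynomial.funext fun x => by simp [hc x])
  obtain ⟨a, ha⟩ := hex
  -- E-th roots of the a i
  set E : ℕ := ∑ j : Fin n, e j with hEdef
  have hE : 0 < E :=
    Finset.sum_pos' (fun _ _ => Nat.zero_le _)
      ⟨j₀, Finset.mem_univ _, Nat.pos_of_ne_zero hj₀⟩
  choose t ht using fun i : Fin s => IsAlgClosed.exists_pow_nat_eq (a i) hE
  -- Step 3: apply the substitution θ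
  set θ : MvPolynomial (Fin s × Fin n) C →ₐ[C] MvPolynomial (Fin n) K :=
    aeval (fun p : Fin s × Fin n =>
      if p.1 = τ then (X p.2 : MvPolynomial (Fin n) K) else MvPolynomial.C (t p.1))
    with hθdef
  set M : MvPolynomial (Fin n) K := ∏ j : Fin n, (X j : MvPolynomial (Fin n) K) ^ e j
    with hMdef
  have h2 := map_dvd θ h
  have hCγ : θ (MvPolynomial.C γ) = MvPolynomial.C (algebraMap C K γ) := by
    rw [hθdef, aeval_C, IsScalarTower.algebraMap_apply C K (MvPolynomial (Fin n) K)]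
    rfl
  have hθM : θ ((∏ j : Fin n, (X (τ, j) : MvPolynomial (Fin s × Fin n) C) ^ e j)
      - MvPolynomial.C γ) = M - MvPolynomial.C (algebraMap C K γ) := by
    rw [map_sub, hCγ, map_prod]
    simp [hθdef, hMdef, map_pow]
  have hθA : θ (aeval (fun i : Fin s =>
        ∏ j : Fin n, (X (i, j) : MvPolynomial (Fin s × Fin n) C) ^ e j) P)
      = aeval (fun i : Fin s => if i = τ then M else MvPolynomial.C (a i)) P := by
    rw [show θ (aeval (fun i : Fin s =>
          ∏ j : Fin n, (X (i, j) : MvPolynomial (Fin s × Fin n) C) ^ e j) P)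
        = (θ.comp (aeval (fun i : Fin s =>
            ∏ j : Fin n, (X (i, j) : MvPolynomial (Fin s × Fin n) C) ^ e j))) P from rfl,
      comp_aeval]
    have hfun : (fun i : Fin s => θ (∏ j : Fin n,
          (X (i, j) : MvPolynomial (Fin s × Fin n) C) ^ e j))
        = fun i : Fin s => if i = τ then M else MvPolynomial.C (a i) := by
      funext i
      rw [map_prod]
      by_cases hi : i = τ
      · rw [hi, if_pos rfl, hMdef]
        simp [hθdef, map_pow]
      · rw [if_neg hi]
        have : ∀ j : Fin n, θ (X (i, j) ^ e j)
            = MvPolynomial.C (t i ^ e j) := by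
          intro j
          rw [map_pow, hθdef, aeval_X, if_neg hi, ← map_pow]
        rw [Finset.prod_congr rfl fun j _ => this j, ← map_prod,
          Finset.prod_pow_eq_pow_sum, ← hEdef, ht]
    rw [hfun]
  rw [hθM, hθA] at h2
  -- Step 4: evaluate at a root z of M - γ
  obtain ⟨r, hr⟩ := IsAlgClosed.exists_pow_nat_eq (k := K) (algebraMap C K γ)
    (Nat.pos_of_ne_zero hj₀)
  set z : Fin n → K := fun j => if j = j₀ then r else 1 with hzdef
  have hzM : aeval z M = algebraMap C K γ := by
    rw [hMdef, map_prod]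
    rw [Finset.prod_eq_single j₀ (fun b _ hb => by simp [hzdef, hb]) (by simp)]
    simp [hzdef, hr]
  set ψ : MvPolynomial (Fin n) K →ₐ[C] K := (aeval z).restrictScalars C with hψdef
  have hψM : ψ M = algebraMap C K γ := by
    rw [hψdef, AlgHom.restrictScalars_apply, hzM]
  have hψ0 : ψ (M - MvPolynomial.C (algebraMap C K γ)) = 0 := by
    rw [map_sub, hψM, hψdef, AlgHom.restrictScalars_apply, aeval_C]
    simp
  obtain ⟨q, hq⟩ := h2
  have hzero : ψ (aeval (fun i : Fin s =>
      if i = τ then M else MvPolynomial.C (a i)) P) = 0 := by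
    rw [hq, map_mul, hψ0, zero_mul]
  -- Step 5: compute the same evaluation as eval a (map GC) ≠ 0
  have hcomp : ψ (aeval (fun i : Fin s =>
        if i = τ then M else MvPolynomial.C (a i)) P)
      = aeval (fun i : Fin s => if i = τ then algebraMap C K γ else a i) P := by
    rw [show ψ (aeval (fun i : Fin s =>
          if i = τ then M else MvPolynomial.C (a i)) P)
        = (ψ.comp (aeval (fun i : Fin s =>
            if i = τ then M else MvPolynomial.C (a i)))) P from rfl,
      comp_aeval]
    have hfun : (fun i : Fin s => ψ (if i = τ then M else MvPolynomial.C (a i)))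
        = fun i : Fin s => if i = τ then algebraMap C K γ else a i := by
      funext i
      by_cases hi : i = τ
      · rw [hi, if_pos rfl, if_pos rfl, hψM]
      · rw [if_neg hi, if_neg hi, hψdef, AlgHom.restrictScalars_apply, aeval_C]
        simp
    rw [hfun]
  have hGCval : (aeval (fun i : Fin s => if i = τ then algebraMap C K γ else a i) P : K)
      = eval a (MvPolynomial.map (algebraMap C K) GC) := by
    rw [eval_map, ← aeval_def, hGCdef]
    rw [show (aeval a (aeval (Function.update X τ (MvPolynomial.C γ)) P) : K)
        = ((aeval a : MvPolynomial (Fin s) C →ₐ[C] K).comp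
            (aeval (Function.update X τ (MvPolynomial.C γ)))) P from rfl,
      comp_aeval]
    have hfun : (fun i : Fin s => if i = τ then algebraMap C K γ else a i)
        = fun i : Fin s =>
          aeval a (Function.update X τ (MvPolynomial.C γ) i) := by
      funext i
      by_cases hi : i = τ
      · rw [hi, if_pos rfl, Function.update_self, aeval_C]
      · rw [if_neg hi, Function.update_of_ne hi, aeval_X]
    rw [hfun]
  rw [hcomp, hGCval] at hzero
  exact ha hzero
end
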